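/- arXiv:2404.04912 — 13 statements merged into one kernel-verified Lean document; each statement's English description precedes it below -/
import Mathlib

section
/- Let w > 0, r > 0, B > 0 and p ∈ ℝ. Then the function S : ℝ → ℝ defined by S(x) = −(w·r/B)·(x − p) − x³/r is strictly decreasing on ℝ and has exactly one real root m; moreover this root satisfies |m| ≤ |p| and m·p ≥ 0. -/
/-!
With `c = w r / B > 0`, the self function is `c (p - x) - x³/r`: a nonincreasing affine part
plus the strictly decreasing `-x³/r`, hence strictly decreasing. Its values `c p` at `0` and
`-p³/r` at `p` have opposite signs, so the intermediate value theorem gives a root. At a root `m`,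
multiplying `c (p - m) = m³/r` by `m` gives `c (m p - m²) = m⁴/r ≥ 0`, i.e. `m² ≤ m p`,
which places `m` between `0` and `p`.
-/

open Set

theorem exists_eq_zero_of_mul_nonpos {f : ℝ → ℝ} (hf : Continuous f) {a b : ℝ}
    (hab : f a * f b ≤ 0) : ∃ x ∈ uIcc a b, f x = 0 := by
  have hzero : (0 : ℝ) ∈ uIcc (f a) (f b) :=
    mem_uIcc.2 (by rcases mul_nonpos_iff.1 hab with h | h <;> tauto)
  exact intermediate_value_uIcc hf.continuousOn hzero

theorem abs_le_abs_and_mul_nonneg_of_sq_le_mul {m p : ℝ} (h : m ^ 2 ≤ m * p) :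
    |m| ≤ |p| ∧ 0 ≤ m * p := by
  have hmp : 0 ≤ m * p := (sq_nonneg m).trans h
  refine ⟨?_, hmp⟩
  have hsq : |m| ^ 2 ≤ |m| * |p| := by
    rw [sq_abs, ← abs_mul, abs_of_nonneg hmp]; exact h
  rcases (abs_nonneg m).eq_or_lt with h0 | h0
  · rw [← h0]; exact abs_nonneg p
  · exact le_of_mul_le_mul_left (by rw [← sq]; exact hsq) h0

noncomputable def selfFun (c r p x : ℝ) : ℝ := -c * (x - p) - x ^ 3 / r

section

variable {c r : ℝ} (p : ℝ)

theorem strictAnti_selfFun (hc : 0 ≤ c) (hr : 0 < r) : StrictAnti (selfFun c r p) := by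
  have haffine : Antitone fun x : ℝ => -c * (x - p) := fun x y hxy => by
    simp only [neg_mul, neg_le_neg_iff]; gcongr
  have hcube : StrictAnti fun x : ℝ => -(x ^ 3 / r) :=
    ((Odd.strictMono_pow (by decide)).div_const hr).neg
  exact haffine.add_strictAnti hcube

theorem continuous_selfFun : Continuous (selfFun c r p) := by
  unfold selfFun; fun_prop

theorem exists_selfFun_eq_zero (hc : 0 ≤ c) (hr : 0 < r) : ∃ m, selfFun c r p m = 0 := by
  have hsign : selfFun c r p 0 * selfFun c r p p ≤ 0 := by
    have : selfFun c r p 0 * selfFun c r p p = -(c * p ^ 4 / r) := by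
      unfold selfFun; ring
    rw [this, neg_nonpos]; positivity
  obtain ⟨m, -, hm⟩ := exists_eq_zero_of_mul_nonpos (continuous_selfFun p) hsign
  exact ⟨m, hm⟩

theorem sq_le_mul_of_selfFun_eq_zero (hc : 0 < c) (hr : 0 < r) {m : ℝ}
    (hm : selfFun c r p m = 0) : m ^ 2 ≤ m * p := by
  have hroot : c * (m * p - m ^ 2) = m ^ 4 / r := by
    unfold selfFun at hm
    field_simp at hm ⊢
    linear_combination m * hm
  have : 0 ≤ c * (m * p - m ^ 2) := hroot ▸ by positivity
  linarith [nonneg_of_mul_nonneg_right this hc]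

end

/-- The self function `S(x) = -(w r / B)(x - p) - x³/r` is strictly decreasing,
has exactly one real root `m`, and this root satisfies `|m| ≤ |p|` and `m · p ≥ 0`. -/
theorem self_function_properties (w r B p : ℝ) (hw : 0 < w) (hr : 0 < r) (hB : 0 < B) :
    StrictAnti (fun x : ℝ => -(w * r / B) * (x - p) - x ^ 3 / r) ∧
    (∃! m : ℝ, -(w * r / B) * (m - p) - m ^ 3 / r = 0) ∧
    (∀ m : ℝ, -(w * r / B) * (m - p) - m ^ 3 / r = 0 → |m| ≤ |p| ∧ 0 ≤ m * p) := by
  have hc : 0 < w * r / B := by positivity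
  have hanti : StrictAnti (selfFun (w * r / B) r p) := strictAnti_selfFun p hc.le hr
  obtain ⟨m, hm⟩ := exists_selfFun_eq_zero p hc.le hr
  refine ⟨hanti, ⟨m, hm, fun y hy => hanti.injective (hy.trans hm.symm)⟩, fun m hm => ?_⟩
  exact abs_le_abs_and_mul_nonneg_of_sq_le_mul (sq_le_mul_of_selfFun_eq_zero p hc hr hm)
end

section
/- There exists ζ ≥ 0 such that for every z ∈ ℝⁿ with (1/2)·∑_{i=1}^n z_i² > ζ one has ∑_{i=1}^n z_i · f_i(z) < 0; that is, the Lyapunov function V(z) = (1/2)‖z‖² is strictly decreasing along the opinion dynamics outside the sublevel set {V ≤ ζ}. -/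
/-! Multiplying `f_i(z)` by `z_i` and summing, the friction and influence terms contribute a
polynomial of degree at most two, hence `O(1 + ‖z‖²)`, while the self-damping term contributes
`-∑ z_i⁴ / r_i`, which by Cauchy–Schwarz is at most `-‖z‖⁴ / K` for some `K > 0`. The quartic term
wins once `‖z‖²` is large. -/

open Finset

section

variable {ι : Type*} [Fintype ι] (z : ι → ℝ)

lemma abs_le_one_add_sum_sq (i : ι) : |z i| ≤ 1 + ∑ j, z j ^ 2 := by
  have hsq : z i ^ 2 ≤ ∑ j, z j ^ 2 :=
    single_le_sum (fun j _ => sq_nonneg (z j)) (mem_univ i)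
  nlinarith [sq_abs (z i), sq_nonneg (|z i| - 1)]

lemma abs_mul_le_sum_sq (i k : ι) : |z i * z k| ≤ ∑ j, z j ^ 2 := by
  have hi : z i ^ 2 ≤ ∑ j, z j ^ 2 :=
    single_le_sum (fun j _ => sq_nonneg (z j)) (mem_univ i)
  have hk : z k ^ 2 ≤ ∑ j, z j ^ 2 :=
    single_le_sum (fun j _ => sq_nonneg (z j)) (mem_univ k)
  rw [abs_le]
  constructor <;> nlinarith [sq_nonneg (z i + z k), sq_nonneg (z i - z k)]

lemma mul_affine_drift_le (i : ι) (c q : ℝ) (b : ι → ℝ) :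
    z i * (-c * (z i - q) + ∑ k, b k * (z k - z i)) ≤
      (|c| * (1 + |q|) + 2 * ∑ k, |b k|) * (1 + ∑ j, z j ^ 2) := by
  set S := ∑ j, z j ^ 2
  have hS : 0 ≤ S := sum_nonneg fun j _ => sq_nonneg (z j)
  have hfriction : z i * (-c * (z i - q)) ≤ |c| * (1 + |q|) * (1 + S) := by
    have hzz := abs_mul_le_sum_sq z i i
    have hz := abs_le_one_add_sum_sq z i
    have hquad : -c * (z i * z i) ≤ |c| * |z i * z i| := by
      rw [← abs_neg c, ← abs_mul]; exact le_abs_self _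
    have hlin : c * q * z i ≤ |c| * |q| * |z i| := by
      rw [← abs_mul, ← abs_mul]; exact le_abs_self _
    calc z i * (-c * (z i - q)) = -c * (z i * z i) + c * q * z i := by ring
      _ ≤ |c| * |z i * z i| + |c| * |q| * |z i| := add_le_add hquad hlin
      _ ≤ |c| * (1 + S) + |c| * |q| * (1 + S) := by gcongr; linarith
      _ = |c| * (1 + |q|) * (1 + S) := by ring
  have hinfluence : ∀ k, z i * (b k * (z k - z i)) ≤ 2 * |b k| * (1 + S) := fun k => by
    calc z i * (b k * (z k - z i)) = b k * (z i * z k - z i * z i) := by ring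
      _ ≤ |b k| * (|z i * z k| + |z i * z i|) := by
          refine (le_abs_self _).trans ?_
          rw [abs_mul]
          gcongr
          exact abs_sub _ _
      _ ≤ |b k| * (S + S) := by
          gcongr <;> exact abs_mul_le_sum_sq z _ _
      _ ≤ 2 * |b k| * (1 + S) := by nlinarith [abs_nonneg (b k)]
  calc z i * (-c * (z i - q) + ∑ k, b k * (z k - z i))
      = z i * (-c * (z i - q)) + ∑ k, z i * (b k * (z k - z i)) := by rw [mul_add, mul_sum]
    _ ≤ |c| * (1 + |q|) * (1 + S) + ∑ k, 2 * |b k| * (1 + S) :=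
        add_le_add hfriction (sum_le_sum fun k _ => hinfluence k)
    _ = (|c| * (1 + |q|) + 2 * ∑ k, |b k|) * (1 + S) := by
        rw [← sum_mul, ← mul_sum]; ring

end

lemma exists_pos_sq_sum_sq_le_mul_sum_pow_four_div {ι : Type*} [Fintype ι] {r : ι → ℝ}
    (hr : ∀ i, 0 < r i) :
    ∃ K > 0, ∀ z : ι → ℝ, (∑ i, z i ^ 2) ^ 2 ≤ K * ∑ i, z i ^ 4 / r i := by
  set ρ := 1 + ∑ i, r i
  have hρ : 0 < ρ := by have := sum_nonneg fun i (_ : i ∈ univ) => (hr i).le; linarith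
  refine ⟨(Fintype.card ι + 1) * ρ, by positivity, fun z => ?_⟩
  have hcs : (∑ i, z i ^ 2) ^ 2 ≤ Fintype.card ι * ∑ i, z i ^ 4 := by
    have h := sq_sum_le_card_mul_sum_sq (s := univ) (f := fun i => z i ^ 2)
    simp only [card_univ, ← pow_mul] at h
    exact h
  have hquartic : ∑ i, z i ^ 4 ≤ ρ * ∑ i, z i ^ 4 / r i := by
    rw [mul_sum]
    refine sum_le_sum fun i _ => ?_
    have hri : r i ≤ ρ := by
      have := single_le_sum (fun j (_ : j ∈ univ) => (hr j).le) (mem_univ i); linarith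
    rw [mul_div_assoc', le_div_iff₀ (hr i), mul_comm ρ]
    exact mul_le_mul_of_nonneg_left hri (by positivity)
  have hQ : 0 ≤ ∑ i, z i ^ 4 := sum_nonneg fun i _ => by positivity
  calc (∑ i, z i ^ 2) ^ 2 ≤ (Fintype.card ι + 1) * ∑ i, z i ^ 4 := by linarith
    _ ≤ (Fintype.card ι + 1) * (ρ * ∑ i, z i ^ 4 / r i) := by gcongr
    _ = _ := by ring

lemma exists_forall_mul_one_add_sub_neg {C K : ℝ} (hK : 0 < K) :
    ∃ ζ : ℝ, 0 ≤ ζ ∧ ∀ S Q : ℝ, ζ < (1 / 2) * S → S ^ 2 ≤ K * Q → C * (1 + S) - Q < 0 := by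
  refine ⟨1 + K * |C|, by positivity, fun S Q hS hSQ => ?_⟩
  have hKC : 0 ≤ K * |C| := by positivity
  have hlin : K * C * (1 + S) ≤ 2 * (K * |C|) * S := by
    nlinarith [mul_le_mul_of_nonneg_left (le_abs_self C) hK.le]
  nlinarith

theorem lyapunov_decrease_outside_sublevel_set_general
    (n : ℕ) (p w r : Fin n → ℝ) (a : Fin n → Fin n → ℝ)
    (hr : ∀ i, 0 < r i)
    (B : ℝ)
    (f : (Fin n → ℝ) → Fin n → ℝ)
    (hf : ∀ z i, f z i =
      -(w i * r i / B) * (z i - p i) + (∑ k, (a i k * r k / B) * (z k - z i))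
        - (z i) ^ 3 / r i) :
    ∃ ζ : ℝ, 0 ≤ ζ ∧ ∀ z : Fin n → ℝ,
      ζ < (1 / 2) * ∑ i, (z i) ^ 2 → (∑ i, z i * f z i) < 0 := by
  obtain ⟨K, hK, hquartic⟩ := exists_pos_sq_sum_sq_le_mul_sum_pow_four_div hr
  set C := ∑ i, (|w i * r i / B| * (1 + |p i|) + 2 * ∑ k, |a i k * r k / B|)
  obtain ⟨ζ, hζ, hneg⟩ := exists_forall_mul_one_add_sub_neg (C := C) hK
  refine ⟨ζ, hζ, fun z hz => ?_⟩
  have hdamping : ∀ i, z i * ((z i) ^ 3 / r i) = z i ^ 4 / r i := fun i => by ring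
  calc ∑ i, z i * f z i
      = ∑ i, z i * (-(w i * r i / B) * (z i - p i) + ∑ k, (a i k * r k / B) * (z k - z i))
          - ∑ i, z i ^ 4 / r i := by
        simp only [hf, mul_sub, hdamping, sum_sub_distrib]
    _ ≤ C * (1 + ∑ i, z i ^ 2) - ∑ i, z i ^ 4 / r i := by
        rw [sum_mul]
        exact sub_le_sub_right (sum_le_sum fun i _ => mul_affine_drift_le z i _ _ _) _
    _ < 0 := hneg _ _ hz (hquartic z)

/-- There exists `ζ ≥ 0` such that the Lyapunov function `V(z) = ½‖z‖²` strictly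
decreases along the opinion dynamics outside the sublevel set `{V ≤ ζ}`. -/
theorem lyapunov_decrease_outside_sublevel_set
    (n : ℕ) (p w r : Fin n → ℝ) (a : Fin n → Fin n → ℝ)
    (hw : ∀ i, 0 < w i) (hr : ∀ i, 0 < r i)
    (B : ℝ) (hB : B = ∑ k, r k)
    (f : (Fin n → ℝ) → Fin n → ℝ)
    (hf : ∀ z i, f z i =
      -(w i * r i / B) * (z i - p i) + (∑ k, (a i k * r k / B) * (z k - z i))
        - (z i) ^ 3 / r i) :
    ∃ ζ : ℝ, 0 ≤ ζ ∧ ∀ z : Fin n → ℝ,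
      ζ < (1 / 2) * ∑ i, (z i) ^ 2 → (∑ i, z i * f z i) < 0 :=
  lyapunov_decrease_outside_sublevel_set_general n p w r a hr B f hf
end

section
/- (Ultimate boundedness of opinions) There exists η ≥ 0, depending only on the parameters (p_i, w_i, r_i, a_{ik}) and not on the initial condition, such that for every solution z of the opinion dynamics there exists T ≥ 0 with |z_i(t)| ≤ η for all i ∈ {1,…,n} and all t ≥ T. -/
open Finset

/-!
The weighted energy `E(z) = ∑ rᵢ zᵢ²` is a Lyapunov function outside a large ball. Along the
dynamics, `dE/dt = ∑ 2 rᵢ zᵢ fᵢ(z)`: the cubic damping contributes `-2 ∑ zᵢ⁴ ≤ -2 ‖z‖⁴` (sup norm),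
while the affine coupling and stubbornness terms contribute only `O(‖z‖²)`. Hence there is a level
`K`, depending only on the parameters, above which `dE/dt ≤ -1`. A trajectory therefore enters
`{E ≤ K}` within time `E(z(0)) - K` and never leaves it, and on that sublevel set `|zᵢ| ≤ √(K / rᵢ)`.
-/

section Comparison

variable {V V' : ℝ → ℝ} {K t₀ : ℝ}

theorem le_of_hasDerivAt_of_deriv_neg_of_eq (hV : ∀ t, t₀ ≤ t → HasDerivAt V (V' t) t)
    (hneg : ∀ t, t₀ ≤ t → V t = K → V' t < 0) (h₀ : V t₀ ≤ K) {t : ℝ} (ht : t₀ ≤ t) :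
    V t ≤ K :=
  image_le_of_deriv_right_lt_deriv_boundary (B := fun _ => K) (B' := fun _ => 0)
    (fun x hx => (hV x hx.1).continuousAt.continuousWithinAt)
    (fun x hx => (hV x hx.1).hasDerivWithinAt) h₀ (fun x => hasDerivAt_const x K)
    (fun x hx => hneg x hx.1) ⟨ht, le_rfl⟩

theorem exists_le_of_hasDerivAt_le_neg_one (hV : ∀ t, t₀ ≤ t → HasDerivAt V (V' t) t)
    (hdecay : ∀ t, t₀ ≤ t → K ≤ V t → V' t ≤ -1) {T : ℝ} (hT : t₀ ≤ T)
    (hVT : V t₀ - K ≤ T - t₀) : ∃ t ∈ Set.Icc t₀ T, V t ≤ K := by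
  by_contra! hgt
  have hline : ∀ x, HasDerivAt (fun t => V t₀ + t₀ - t) (-1) x := fun x =>
    (hasDerivAt_id x).const_sub (V t₀ + t₀)
  have hbelow_line := image_le_of_deriv_right_le_deriv_boundary (B := fun t => V t₀ + t₀ - t)
    (fun x hx => (hV x hx.1).continuousAt.continuousWithinAt)
    (fun x hx => (hV x hx.1).hasDerivWithinAt) (by simp)
    (fun x _ => (hline x).continuousAt.continuousWithinAt) (fun x _ => (hline x).hasDerivWithinAt)
    (fun x hx => hdecay x hx.1 (hgt x ⟨hx.1, hx.2.le⟩).le) ⟨hT, le_rfl⟩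
  linarith [hgt T ⟨hT, le_rfl⟩]

theorem le_of_hasDerivAt_le_neg_one (hV : ∀ t, t₀ ≤ t → HasDerivAt V (V' t) t)
    (hdecay : ∀ t, t₀ ≤ t → K ≤ V t → V' t ≤ -1) {t : ℝ} (ht : t₀ + max 0 (V t₀ - K) ≤ t) :
    V t ≤ K := by
  obtain ⟨t₁, ⟨ht₀₁, ht₁⟩, hVt₁⟩ :=
    exists_le_of_hasDerivAt_le_neg_one hV hdecay (T := t₀ + max 0 (V t₀ - K)) (by simp)
      (by simp)
  exact le_of_hasDerivAt_of_deriv_neg_of_eq (fun s hs => hV s (ht₀₁.trans hs))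
    (fun s hs hVs => (hdecay s (ht₀₁.trans hs) hVs.ge).trans_lt (by norm_num)) hVt₁ (ht₁.trans ht)

end Comparison

section Energy

variable {ι : Type*} [Fintype ι]

theorem norm_pow_le_sum_norm_pow {E : Type*} [SeminormedAddCommGroup E] (s : ι → E) {m : ℕ}
    (hm : m ≠ 0) : ‖s‖ ^ m ≤ ∑ i, ‖s i‖ ^ m := by
  cases isEmpty_or_nonempty ι
  · simp [Subsingleton.elim s 0, hm]
  · obtain ⟨i, hi⟩ := (IsGreatest.pi_norm s).1
    rw [← hi]
    exact single_le_sum (f := fun j => ‖s j‖ ^ m) (fun j _ => by positivity) (mem_univ i)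

theorem abs_affine_drift_le (c p : ι → ℝ) (b : ι → ι → ℝ) (s : ι → ℝ) (i : ι) :
    |-c i * (s i - p i) + ∑ k, b i k * (s k - s i)| ≤
      (|c i| * (1 + |p i|) + 2 * ∑ k, |b i k|) * (1 + ‖s‖) := by
  have hs : ∀ k, |s k| ≤ ‖s‖ := norm_le_pi_norm s
  have hstubborn : |c i * (s i - p i)| ≤ |c i| * (1 + |p i|) * (1 + ‖s‖) := by
    rw [abs_mul, mul_assoc]
    refine mul_le_mul_of_nonneg_left ?_ (abs_nonneg _)
    nlinarith [abs_sub (s i) (p i), hs i, abs_nonneg (p i), norm_nonneg s]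
  have hcoupling : |∑ k, b i k * (s k - s i)| ≤ 2 * (∑ k, |b i k|) * (1 + ‖s‖) := by
    rw [mul_comm 2, mul_assoc, sum_mul]
    refine (abs_sum_le_sum_abs _ _).trans (sum_le_sum fun k _ => ?_)
    rw [abs_mul]
    refine mul_le_mul_of_nonneg_left ?_ (abs_nonneg _)
    linarith [abs_sub (s k) (s i), hs k, hs i]
  calc |-c i * (s i - p i) + ∑ k, b i k * (s k - s i)|
      ≤ |c i * (s i - p i)| + |∑ k, b i k * (s k - s i)| := by
        simpa only [neg_mul, abs_neg] using abs_add_le (-c i * (s i - p i)) _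
    _ ≤ _ := by linarith

def weightedEnergy (r s : ι → ℝ) : ℝ := ∑ i, r i * s i ^ 2

def weightedEnergyRate (r : ι → ℝ) (F : (ι → ℝ) → ι → ℝ) (s : ι → ℝ) : ℝ :=
  ∑ i, 2 * r i * s i * F s i

theorem hasDerivAt_weightedEnergy {r : ι → ℝ} {F : (ι → ℝ) → ι → ℝ} {z : ℝ → ι → ℝ} {t : ℝ}
    (hz : ∀ i, HasDerivAt (fun t => z t i) (F (z t) i) t) :
    HasDerivAt (fun t => weightedEnergy r (z t)) (weightedEnergyRate r F (z t)) t := by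
  refine HasDerivAt.fun_sum fun i _ => (((hz i).fun_pow 2).const_mul (r i)).congr_deriv ?_
  push_cast
  ring

theorem weightedEnergy_le {r : ι → ℝ} (hr : ∀ i, 0 ≤ r i) (s : ι → ℝ) :
    weightedEnergy r s ≤ (∑ i, r i) * ‖s‖ ^ 2 := by
  rw [weightedEnergy, sum_mul]
  refine sum_le_sum fun i _ => mul_le_mul_of_nonneg_left ?_ (hr i)
  simpa using pow_le_pow_left₀ (norm_nonneg (s i)) (norm_le_pi_norm s i) 2

theorem abs_le_sqrt_of_weightedEnergy_le {r s : ι → ℝ} {K : ℝ} (hr : ∀ i, 0 < r i)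
    (hK : weightedEnergy r s ≤ K) (i : ι) : |s i| ≤ √(K / r i) := by
  refine Real.abs_le_sqrt ?_
  rw [le_div_iff₀ (hr i), mul_comm]
  refine le_trans ?_ hK
  exact single_le_sum (fun j _ => mul_nonneg (hr j).le (sq_nonneg (s j))) (mem_univ i)

theorem weightedEnergyRate_le {r C : ι → ℝ} {F : (ι → ℝ) → ι → ℝ} (hr : ∀ i, 0 < r i)
    (hF : ∀ s i, |F s i + s i ^ 3 / r i| ≤ C i * (1 + ‖s‖)) (s : ι → ℝ) :
    weightedEnergyRate r F s ≤ 2 * (∑ i, r i * C i) * ‖s‖ * (1 + ‖s‖) - 2 * ‖s‖ ^ 4 := by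
  have hterm : ∀ i, 2 * r i * s i * F s i ≤
      2 * (r i * C i) * ‖s‖ * (1 + ‖s‖) - 2 * s i ^ 4 := by
    intro i
    have hsplit : 2 * r i * s i * F s i =
        2 * r i * (s i * (F s i + s i ^ 3 / r i)) - 2 * s i ^ 4 := by
      field_simp [(hr i).ne']
      ring
    have hpert : s i * (F s i + s i ^ 3 / r i) ≤ ‖s‖ * (C i * (1 + ‖s‖)) := by
      refine (le_abs_self _).trans ?_
      rw [abs_mul]
      exact mul_le_mul (norm_le_pi_norm s i) (hF s i) (abs_nonneg _) (norm_nonneg _)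
    rw [hsplit]
    nlinarith [hr i]
  have hquartic : ‖s‖ ^ 4 ≤ ∑ i, s i ^ 4 := by
    simpa [Even.pow_abs (by decide : Even 4)] using norm_pow_le_sum_norm_pow s four_ne_zero
  calc weightedEnergyRate r F s
      ≤ ∑ i, (2 * (r i * C i) * ‖s‖ * (1 + ‖s‖) - 2 * s i ^ 4) := sum_le_sum fun i _ => hterm i
    _ = 2 * (∑ i, r i * C i) * ‖s‖ * (1 + ‖s‖) - 2 * ∑ i, s i ^ 4 := by
      rw [sum_sub_distrib, ← sum_mul, ← sum_mul, ← mul_sum, ← mul_sum]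
    _ ≤ 2 * (∑ i, r i * C i) * ‖s‖ * (1 + ‖s‖) - 2 * ‖s‖ ^ 4 := by linarith

theorem exists_weightedEnergyRate_le_neg_one {r C : ι → ℝ} {F : (ι → ℝ) → ι → ℝ}
    (hr : ∀ i, 0 < r i) (hF : ∀ s i, |F s i + s i ^ 3 / r i| ≤ C i * (1 + ‖s‖)) :
    ∃ K, ∀ s, K ≤ weightedEnergy r s → weightedEnergyRate r F s ≤ -1 := by
  have hC : ∀ i, 0 ≤ C i := fun i => by simpa using (abs_nonneg _).trans (hF 0 i)
  set A := 2 * ∑ i, r i * C i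
  have hA : 0 ≤ A := mul_nonneg zero_le_two (sum_nonneg fun i _ => mul_nonneg (hr i).le (hC i))
  have hR : 0 ≤ ∑ i, r i := sum_nonneg fun i _ => (hr i).le
  -- `E ≤ (∑ r) ‖s‖²`, so `E ≥ K` forces `‖s‖ ≥ A + 1`, where the quartic term dominates.
  refine ⟨(∑ i, r i) * (A + 1) ^ 2 + 1, fun s hs => ?_⟩
  have hnorm : A + 1 ≤ ‖s‖ := by
    by_contra! hlt
    have hsq : ‖s‖ ^ 2 ≤ (A + 1) ^ 2 := pow_le_pow_left₀ (norm_nonneg _) hlt.le 2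
    nlinarith [weightedEnergy_le (fun i => (hr i).le) s, mul_le_mul_of_nonneg_left hsq hR]
  have hsq : A + 1 ≤ ‖s‖ ^ 2 := by nlinarith
  have hlin : A * ‖s‖ * (1 + ‖s‖) ≤ 2 * A * ‖s‖ ^ 2 := by
    nlinarith [mul_nonneg (mul_nonneg hA (norm_nonneg s)) (by linarith : 0 ≤ ‖s‖ - 1)]
  have hquartic : (A + 1) * ‖s‖ ^ 2 ≤ ‖s‖ ^ 4 := by nlinarith
  calc weightedEnergyRate r F s ≤ A * ‖s‖ * (1 + ‖s‖) - 2 * ‖s‖ ^ 4 :=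
        weightedEnergyRate_le hr hF s
    _ ≤ -1 := by nlinarith

end Energy

theorem ultimate_boundedness_of_opinions_general
    (n : ℕ) (p w r : Fin n → ℝ) (a : Fin n → Fin n → ℝ)
    (hr : ∀ i, 0 < r i)
    (B : ℝ)
    (f : (Fin n → ℝ) → Fin n → ℝ)
    (hf : ∀ z i, f z i =
      -(w i * r i / B) * (z i - p i) + (∑ k, (a i k * r k / B) * (z k - z i))
        - (z i) ^ 3 / r i) :
    ∃ η : ℝ, 0 ≤ η ∧ ∀ z : ℝ → Fin n → ℝ,
      (∀ i, Differentiable ℝ (fun t => z t i)) →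
      (∀ t : ℝ, 0 ≤ t → ∀ i, HasDerivAt (fun s => z s i) (f (z t) i) t) →
      ∃ T : ℝ, 0 ≤ T ∧ ∀ i, ∀ t : ℝ, T ≤ t → |z t i| ≤ η := by
  have hdrift : ∀ s i, |f s i + s i ^ 3 / r i| ≤
      (|w i * r i / B| * (1 + |p i|) + 2 * ∑ k, |a i k * r k / B|) * (1 + ‖s‖) := by
    intro s i
    rw [hf, sub_add_cancel]
    exact abs_affine_drift_le (fun i => w i * r i / B) p (fun i k => a i k * r k / B) s i
  obtain ⟨K, hK⟩ := exists_weightedEnergyRate_le_neg_one hr hdrift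
  refine ⟨∑ j, √(K / r j), sum_nonneg fun j _ => Real.sqrt_nonneg _, fun z _ hz => ?_⟩
  refine ⟨max 0 (weightedEnergy r (z 0) - K), le_max_left _ _, fun i t ht => ?_⟩
  have hE : weightedEnergy r (z t) ≤ K :=
    le_of_hasDerivAt_le_neg_one (V := fun t => weightedEnergy r (z t))
      (fun t ht => hasDerivAt_weightedEnergy (hz t ht)) (fun t _ => hK (z t))
      (by rwa [zero_add])
  exact (abs_le_sqrt_of_weightedEnergy_le hr hE i).trans
    (single_le_sum (f := fun j => √(K / r j)) (fun j _ => Real.sqrt_nonneg _) (mem_univ i))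

/-- Ultimate boundedness of opinions: there exists `η ≥ 0`, independent of the
initial condition, such that every solution of the opinion dynamics eventually
satisfies `|z_i(t)| ≤ η` for all agents `i`. -/
theorem ultimate_boundedness_of_opinions
    (n : ℕ) (p w r : Fin n → ℝ) (a : Fin n → Fin n → ℝ)
    (hw : ∀ i, 0 < w i) (hr : ∀ i, 0 < r i)
    (B : ℝ) (hB : B = ∑ k, r k)
    (f : (Fin n → ℝ) → Fin n → ℝ)
    (hf : ∀ z i, f z i =
      -(w i * r i / B) * (z i - p i) + (∑ k, (a i k * r k / B) * (z k - z i))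
        - (z i) ^ 3 / r i) :
    ∃ η : ℝ, 0 ≤ η ∧ ∀ z : ℝ → Fin n → ℝ,
      (∀ i, Differentiable ℝ (fun t => z t i)) →
      (∀ t : ℝ, 0 ≤ t → ∀ i, HasDerivAt (fun s => z s i) (f (z t) i) t) →
      ∃ T : ℝ, 0 ≤ T ∧ ∀ i, ∀ t : ℝ, T ≤ t → |z t i| ≤ η :=
  ultimate_boundedness_of_opinions_general n p w r a hr B f hf
end

section
/- (Convergence of opinions of socially closed agents) Let i ∈ {1,…,n} be a socially closed agent, i.e. a_{ik} = 0 for all k ≠ i. Then for every solution z of the opinion dynamics, z_i(t) → m_i as t → ∞, where m_i is the unique real root of the self function S_i. -/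
/-!
For a socially closed agent the influence term vanishes, so its opinion solves the scalar
equation `ẋ = S(x)`. Because `x ↦ x³` is monotone, `S` is strongly decreasing with modulus
`c = wᵢ rᵢ / B`: `(x - m) S(x) ≤ -c (x - m)²` when `S(m) = 0`. Hence `(x - m)²` decays at rate
`2c`, and Grönwall's inequality gives `|zᵢ(t) - m| ≤ |zᵢ(0) - m| e^{-ct}`.
-/

open Filter Topology

section ScalarDissipative

variable {g F : ℝ → ℝ} {m c : ℝ}

theorem abs_sub_le_mul_exp_of_hasDerivAt (hF : ∀ x, (x - m) * F x ≤ -c * (x - m) ^ 2)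
    (hg : ∀ t, 0 ≤ t → HasDerivAt g (F (g t)) t) {t : ℝ} (ht : 0 ≤ t) :
    |g t - m| ≤ |g 0 - m| * Real.exp (-c * t) := by
  have hsq : (g t - m) ^ 2 ≤ (g 0 - m) ^ 2 * Real.exp (-(2 * c) * (t - 0)) := by
    rw [← gronwallBound_ε0]
    refine le_gronwallBound_of_liminf_deriv_right_le (f := fun s => (g s - m) ^ 2)
      (f' := fun s => 2 * (g s - m) * F (g s)) ?_ (fun s hs r hr => ?_) le_rfl
      (fun s _ => ?_) t ⟨ht, le_rfl⟩
    · exact fun s hs => (hg s hs.1).continuousAt.continuousWithinAt.sub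
        continuousWithinAt_const |>.pow 2
    · have hV : HasDerivAt (fun s => (g s - m) ^ 2) (2 * (g s - m) * F (g s)) s := by
        simpa using ((hg s hs.1).sub_const m).fun_pow 2
      exact hV.hasDerivWithinAt.liminf_right_slope_le hr
    · linarith [hF (g s)]
  have hexp : Real.exp (-(2 * c) * (t - 0)) = Real.exp (-c * t) ^ 2 := by
    rw [← Real.exp_nat_mul]; ring_nf
  rw [hexp, ← sq_abs (g 0 - m), ← mul_pow] at hsq
  exact abs_le_of_sq_le_sq hsq (by positivity)

theorem tendsto_of_hasDerivAt_of_dissipative (hc : 0 < c)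
    (hF : ∀ x, (x - m) * F x ≤ -c * (x - m) ^ 2)
    (hg : ∀ t, 0 ≤ t → HasDerivAt g (F (g t)) t) :
    Tendsto g atTop (𝓝 m) := by
  rw [← tendsto_sub_nhds_zero_iff]
  have hdecay : Tendsto (fun t => |g 0 - m| * Real.exp (-c * t)) atTop (𝓝 0) := by
    simpa using (Real.tendsto_exp_neg_atTop_nhds_zero.comp
      (tendsto_id.const_mul_atTop hc)).const_mul |g 0 - m|
  refine squeeze_zero_norm' ?_ hdecay
  filter_upwards [eventually_ge_atTop 0] with t ht
  exact abs_sub_le_mul_exp_of_hasDerivAt hF hg ht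

end ScalarDissipative

/-- `selfFunction (wᵢ rᵢ / B) pᵢ rᵢ` is the self function `Sᵢ`. -/
noncomputable def selfFunction (c p r x : ℝ) : ℝ := -c * (x - p) - x ^ 3 / r

theorem sub_mul_selfFunction_sub_le {c p r : ℝ} (hr : 0 ≤ r) (x y : ℝ) :
    (x - y) * (selfFunction c p r x - selfFunction c p r y) ≤ -c * (x - y) ^ 2 := by
  have hcube : 0 ≤ (x - y) * (x ^ 3 - y ^ 3) := by
    have : (x - y) * (x ^ 3 - y ^ 3) = (x - y) ^ 2 * ((x + y / 2) ^ 2 + 3 / 4 * y ^ 2) := by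
      ring
    rw [this]; positivity
  have : (x - y) * (selfFunction c p r x - selfFunction c p r y)
      = -c * (x - y) ^ 2 - (x - y) * (x ^ 3 - y ^ 3) / r := by
    unfold selfFunction; ring
  rw [this]
  linarith [div_nonneg hcube hr]

theorem socially_closed_agent_converges_general
    (n : ℕ) (p w r : Fin n → ℝ) (a : Fin n → Fin n → ℝ)
    (hw : ∀ i, 0 < w i) (hr : ∀ i, 0 < r i)
    (B : ℝ) (hB : B = ∑ k, r k)
    (f : (Fin n → ℝ) → Fin n → ℝ)
    (hf : ∀ z i, f z i =
      -(w i * r i / B) * (z i - p i) + (∑ k, (a i k * r k / B) * (z k - z i))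
        - (z i) ^ 3 / r i)
    (i : Fin n) (hclosed : ∀ k, k ≠ i → a i k = 0)
    (m : ℝ) (hm : -(w i * r i / B) * (m - p i) - m ^ 3 / r i = 0)
    (z : ℝ → Fin n → ℝ)
    (hsol : ∀ t : ℝ, 0 ≤ t → ∀ j, HasDerivAt (fun s => z s j) (f (z t) j) t) :
    Filter.Tendsto (fun t => z t i) Filter.atTop (nhds m) := by
  set c := w i * r i / B
  have hc : 0 < c := by
    have hB : 0 < B := hB ▸ Finset.sum_pos (fun k _ => hr k) ⟨i, Finset.mem_univ i⟩
    exact div_pos (mul_pos (hw i) (hr i)) hB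
  have hself : ∀ x : Fin n → ℝ, f x i = selfFunction c (p i) (r i) (x i) := by
    intro x
    have hinfluence : ∑ k, (a i k * r k / B) * (x k - x i) = 0 := by
      rw [Finset.sum_eq_single i (fun k _ hk => by rw [hclosed k hk]; ring) (by simp)]
      ring
    rw [hf, hinfluence, selfFunction]
    ring
  have hroot : selfFunction c (p i) (r i) m = 0 := hm
  refine tendsto_of_hasDerivAt_of_dissipative hc (fun x => ?_)
    (fun t ht => hself (z t) ▸ hsol t ht i)
  simpa [hroot] using sub_mul_selfFunction_sub_le (c := c) (p := p i) (hr i).le x m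

/-- Convergence of opinions of socially closed agents: if agent `i` satisfies
`a i k = 0` for all `k ≠ i`, then along every solution of the opinion dynamics
`z i (t) → m i`, the unique real root of its self function. -/
theorem socially_closed_agent_converges
    (n : ℕ) (p w r : Fin n → ℝ) (a : Fin n → Fin n → ℝ)
    (hw : ∀ i, 0 < w i) (hr : ∀ i, 0 < r i)
    (B : ℝ) (hB : B = ∑ k, r k)
    (f : (Fin n → ℝ) → Fin n → ℝ)
    (hf : ∀ z i, f z i =
      -(w i * r i / B) * (z i - p i) + (∑ k, (a i k * r k / B) * (z k - z i))
        - (z i) ^ 3 / r i)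
    (i : Fin n) (hclosed : ∀ k, k ≠ i → a i k = 0)
    (m : ℝ) (hm : -(w i * r i / B) * (m - p i) - m ^ 3 / r i = 0)
    (z : ℝ → Fin n → ℝ)
    (hdiff : ∀ j, Differentiable ℝ (fun t => z t j))
    (hsol : ∀ t : ℝ, 0 ≤ t → ∀ j, HasDerivAt (fun s => z s j) (f (z t) j) t) :
    Filter.Tendsto (fun t => z t i) Filter.atTop (nhds m) :=
  socially_closed_agent_converges_general n p w r a hw hr B hB f hf i hclosed m hm z hsol
end

section
/- (Existence and uniqueness of a globally exponentially stable equilibrium) Suppose the weak antagonistic relations assumption holds: for every agent i, w_i r_i/B > ∑_{k : a_{ik} < 0} 2|a_{ik}| r_k/B. Then there exists exactly one equilibrium point z* ∈ ℝⁿ (i.e. f(z*) = 0), and there exists α > 0 such that every solution z of the opinion dynamics satisfies ‖z(t) − z*‖_∞ ≤ e^{−α t} · ‖z(0) − z*‖_∞ for all t ≥ 0, where ‖·‖_∞ is the supremum norm on ℝⁿ. -/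
/-!
In the sup norm the opinion field is uniformly contracting: writing `f x i - f y i` as
`-D (x i - y i) + ∑ k, A i k (x k - y k)`, the cubic term only enlarges the diagonal `D`, and the
weak antagonism assumption says that `D - ∑ k, |A i k|` is bounded below by some `α > 0`. Along
a coordinate where `|x - y|` is maximal this gives `(x i - y i) (f x i - f y i) ≤ -α (x i - y i)²`,
which makes `f` injective and, by a maximum principle for the largest coordinate, makes
any two solutions approach each other at rate `e^{-α t}`. An equilibrium exists because
for small `h > 0` the Euler step `x ↦ x + h f x` is a `(1 - h α)`-contraction on the
ball of radius `‖f 0‖ / α`, which it maps into itself.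
-/

open Finset Set Filter Topology

theorem exists_pos_forall_le {ι : Type*} [Finite ι] {g : ι → ℝ} (hg : ∀ i, 0 < g i) :
    ∃ α > 0, ∀ i, α ≤ g i :=
  ((eventually_mem_nhdsWithin (a := (0 : ℝ)) (s := Ioi 0)).and (eventually_all.2 fun i =>
    eventually_nhdsWithin_of_eventually_nhds (eventually_le_nhds (hg i)))).exists

theorem exists_fixedPoint_mem_closedBall {E : Type*} [NormedAddCommGroup E]
    [CompleteSpace E] {G : E → E} {x₀ : E} {R K : ℝ} (hK₀ : 0 ≤ K) (hK₁ : K < 1)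
    (hG : ∀ x ∈ Metric.closedBall x₀ R, ∀ y ∈ Metric.closedBall x₀ R,
      ‖G x - G y‖ ≤ K * ‖x - y‖)
    (hx₀ : ‖G x₀ - x₀‖ ≤ (1 - K) * R) :
    ∃ x ∈ Metric.closedBall x₀ R, G x = x := by
  have hR : 0 ≤ R := nonneg_of_mul_nonneg_right ((norm_nonneg _).trans hx₀) (by linarith)
  have hx₀R : x₀ ∈ Metric.closedBall x₀ R := Metric.mem_closedBall_self hR
  have hmaps : MapsTo G (Metric.closedBall x₀ R) (Metric.closedBall x₀ R) := fun x hx => by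
    have hxR : ‖x - x₀‖ ≤ R := mem_closedBall_iff_norm.1 hx
    rw [mem_closedBall_iff_norm]
    calc ‖G x - x₀‖ ≤ ‖G x - G x₀‖ + ‖G x₀ - x₀‖ := norm_sub_le_norm_sub_add_norm_sub _ _ _
      _ ≤ K * ‖x - x₀‖ + (1 - K) * R := add_le_add (hG x hx x₀ hx₀R) hx₀
      _ ≤ R := by nlinarith
  have hcontr : ContractingWith ⟨K, hK₀⟩ (hmaps.restrict G _ _) :=
    ⟨hK₁, LipschitzWith.of_dist_le_mul fun x y => by
      simp only [Subtype.dist_eq, dist_eq_norm, MapsTo.val_restrict_apply]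
      exact hG x x.2 y y.2⟩
  obtain ⟨x, hx, hfix, -⟩ := hcontr.exists_fixedPoint' Metric.isClosed_closedBall.isComplete
    hmaps hx₀R (edist_ne_top _ _)
  exact ⟨x, hx, hfix⟩

theorem le_of_hasDerivWithinAt_nonpos_at_max {ι : Type*} [Finite ι] {u u' : ι → ℝ → ℝ} {m : ℝ}
    (hcont : ∀ k, ContinuousOn (u k) (Ici 0))
    (hderiv : ∀ k, ∀ t ≥ 0, HasDerivWithinAt (u k) (u' k t) (Ici t) t)
    (hmax : ∀ k, ∀ t ≥ 0, (∀ j, u j t ≤ u k t) → u' k t ≤ 0)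
    (h0 : ∀ k, u k 0 ≤ m) {t : ℝ} (ht : 0 ≤ t) (k : ι) : u k t ≤ m := by
  suffices hε : ∀ ε > 0, ∀ k, u k t ≤ m + ε * t by
    refine le_of_forall_pos_le_add fun δ hδ => ?_
    calc u k t ≤ m + δ / (t + 1) * t := hε _ (by positivity) k
      _ ≤ m + δ := by
        gcongr
        rw [div_mul_eq_mul_div, div_le_iff₀ (by positivity)]
        nlinarith
  -- Continuous induction on `[0, t]` against the barrier `m + ε x`: a `u k` touching the
  -- barrier is maximal, so it grows more slowly than the barrier.
  intro ε hε
  set s := {x | ∀ k, u k x ≤ m + ε * x}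
  have hclosed : IsClosed (s ∩ Icc 0 t) := by
    have : s ∩ Icc 0 t = Icc 0 t ∩ ⋂ k, {x ∈ Icc 0 t | u k x ≤ m + ε * x} := by
      ext x; simp only [s, mem_inter_iff, mem_iInter, mem_ofPred_eq]; aesop
    rw [this]
    exact isClosed_Icc.inter (isClosed_iInter fun k => isClosed_Icc.isClosed_le
      ((hcont k).mono Icc_subset_Ici_self) (by fun_prop))
  have hstep : ∀ x ∈ s ∩ Ico 0 t, s ∈ 𝓝[>] x := by
    rintro x ⟨hxs, hx0, -⟩
    refine eventually_all.2 fun k => ?_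
    rcases (hxs k).lt_or_eq with hlt | heq
    · filter_upwards [((hderiv k x hx0).continuousWithinAt.mono Ioi_subset_Ici_self).eventually
        (eventually_lt_nhds hlt), self_mem_nhdsWithin] with y hy hxy
      nlinarith [mem_Ioi.1 hxy]
    · have hk : u' k x < ε := (hmax k x hx0 fun j => heq ▸ hxs j).trans_lt hε
      filter_upwards [(hderiv k x hx0).Ioi_of_Ici.limsup_slope_le' (lt_irrefl x) hk,
        self_mem_nhdsWithin] with y hy hxy
      rw [slope_def_field, div_lt_iff₀ (sub_pos.2 hxy)] at hy
      linarith
  exact hclosed.Icc_subset_of_forall_mem_nhdsWithin (fun k => by simpa using h0 k) hstep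
    ⟨ht, le_rfl⟩

-- The one-sided Lipschitz bound `⟦F x - F y, x - y⟧ ≤ c ‖x - y‖²` for the weak pairing of the
-- sup norm, which only sees the coordinates where `|x - y|` is maximal.
def IsOneSidedLipschitzSup {ι : Type*} (F : (ι → ℝ) → ι → ℝ) (c : ℝ) : Prop :=
  ∀ x y i, (∀ k, |x k - y k| ≤ |x i - y i|) →
    (x i - y i) * (F x i - F y i) ≤ c * (x i - y i) ^ 2

namespace IsOneSidedLipschitzSup

variable {ι : Type*} [Fintype ι] {F : (ι → ℝ) → ι → ℝ} {c : ℝ}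

theorem injective (hF : IsOneSidedLipschitzSup F c) (hc : c < 0) : Function.Injective F := by
  intro x y hxy
  ext k
  have : Nonempty ι := ⟨k⟩
  obtain ⟨i, hi⟩ := Finite.exists_max fun k => |x k - y k|
  have hsq : (x i - y i) ^ 2 ≤ 0 := by
    have := hF x y i hi
    rw [hxy, sub_self, mul_zero] at this
    nlinarith [sq_nonneg (x i - y i)]
  have hxi : x i - y i = 0 := pow_eq_zero_iff two_ne_zero |>.1 (le_antisymm hsq (sq_nonneg _))
  exact sub_eq_zero.1 (abs_nonpos_iff.1 (by simpa [hxi] using hi k))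

theorem norm_sub_le_exp_mul (hF : IsOneSidedLipschitzSup F c) {z y : ℝ → ι → ℝ}
    (hz : ∀ t ≥ 0, ∀ k, HasDerivAt (fun s => z s k) (F (z t) k) t)
    (hy : ∀ t ≥ 0, ∀ k, HasDerivAt (fun s => y s k) (F (y t) k) t) {t : ℝ} (ht : 0 ≤ t) :
    ‖z t - y t‖ ≤ Real.exp (c * t) * ‖z 0 - y 0‖ := by
  -- the maximum principle is applied to the squared coordinates of `e^{-c s} (z s - y s)`
  have he : ∀ s, HasDerivAt (fun s => Real.exp (-c * s)) (Real.exp (-c * s) * -c) s := fun s => by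
    simpa using ((hasDerivAt_id s).const_mul (-c)).exp
  have hu : ∀ k, ∀ s ≥ 0, HasDerivAt (fun s => (Real.exp (-c * s) * (z s k - y s k)) ^ 2)
      (2 * Real.exp (-c * s) ^ 2 *
        ((z s k - y s k) * (F (z s) k - F (y s) k) - c * (z s k - y s k) ^ 2)) s :=
    fun k s hs => by
      refine (((he s).fun_mul ((hz s hs k).fun_sub (hy s hs k))).fun_pow 2).congr_deriv ?_
      norm_num
      ring
  have hbound : ∀ k, (Real.exp (-c * t) * (z t k - y t k)) ^ 2 ≤ ‖z 0 - y 0‖ ^ 2 := by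
    refine le_of_hasDerivWithinAt_nonpos_at_max
      (fun k s hs => (hu k s hs).continuousAt.continuousWithinAt)
      (fun k s hs => (hu k s hs).hasDerivWithinAt) (fun k s hs hmax => ?_) (fun k => ?_) ht
    · have hmax' : ∀ j, |z s j - y s j| ≤ |z s k - y s k| := fun j => by
        have := sq_le_sq.1 (hmax j)
        rwa [abs_mul, abs_mul, abs_of_pos (Real.exp_pos _), mul_le_mul_iff_of_pos_left
          (Real.exp_pos _)] at this
      have := hF (z s) (y s) k hmax'
      nlinarith [sq_nonneg (Real.exp (-c * s))]
    · simpa [sq_le_sq, abs_norm] using norm_le_pi_norm (z 0 - y 0) k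
  refine (pi_norm_le_iff_of_nonneg (by positivity)).2 fun k => ?_
  have := abs_le_of_sq_le_sq (hbound k) (norm_nonneg _)
  rw [abs_mul, abs_of_pos (Real.exp_pos _)] at this
  rw [Pi.sub_apply, Real.norm_eq_abs]
  calc |z t k - y t k| = Real.exp (c * t) * (Real.exp (-c * t) * |z t k - y t k|) := by
        rw [← mul_assoc, ← Real.exp_add]; simp
    _ ≤ Real.exp (c * t) * ‖z 0 - y 0‖ := by gcongr

end IsOneSidedLipschitzSup

section RowDominance

variable {ι : Type*} [Fintype ι] {A d : ι → ℝ} {M : ℝ}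

theorem abs_sum_mul_le (hd : ∀ k, |d k| ≤ M) : |∑ k, A k * d k| ≤ (∑ k, |A k|) * M :=
  calc |∑ k, A k * d k| ≤ ∑ k, |A k| * |d k| := by
        simpa only [abs_mul] using abs_sum_le_sum_abs (fun k => A k * d k) univ
    _ ≤ ∑ k, |A k| * M := by gcongr with k; exact hd k
    _ = (∑ k, |A k|) * M := by rw [sum_mul]

theorem mul_neg_mul_add_sum_le {D α : ℝ} {i : ι} (hα : α ≤ D - ∑ k, |A k|)
    (hi : ∀ k, |d k| ≤ |d i|) : d i * (-D * d i + ∑ k, A k * d k) ≤ -α * d i ^ 2 := by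
  have hsum : d i * ∑ k, A k * d k ≤ (∑ k, |A k|) * d i ^ 2 :=
    calc d i * ∑ k, A k * d k ≤ |d i| * |∑ k, A k * d k| := by
          rw [← abs_mul]; exact le_abs_self _
      _ ≤ |d i| * ((∑ k, |A k|) * |d i|) := by gcongr; exact abs_sum_mul_le hi
      _ = (∑ k, |A k|) * d i ^ 2 := by rw [← sq_abs (d i)]; ring
  nlinarith [sq_nonneg (d i)]

theorem abs_add_mul_neg_mul_add_sum_le {D α h : ℝ} (hh : 0 ≤ h) (hhD : h * D ≤ 1)
    (hα : α ≤ D - ∑ k, |A k|) (hd : ∀ k, |d k| ≤ M) (i : ι) :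
    |d i + h * (-D * d i + ∑ k, A k * d k)| ≤ (1 - h * α) * M := by
  have hM : 0 ≤ M := (abs_nonneg _).trans (hd i)
  calc |d i + h * (-D * d i + ∑ k, A k * d k)|
        = |(1 - h * D) * d i + h * ∑ k, A k * d k| := by ring_nf
    _ ≤ (1 - h * D) * |d i| + h * |∑ k, A k * d k| := by
        refine (abs_add_le _ _).trans_eq ?_
        rw [abs_mul, abs_mul, abs_of_nonneg (sub_nonneg.2 hhD), abs_of_nonneg hh]
    _ ≤ (1 - h * D) * M + h * ((∑ k, |A k|) * M) := by
        gcongr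
        exacts [hd i, abs_sum_mul_le hd]
    _ ≤ (1 - h * α) * M := by nlinarith [mul_le_mul_of_nonneg_left hα (mul_nonneg hh hM)]

end RowDominance

section OpinionDynamics

variable {ι : Type*} [Fintype ι] {p w r : ι → ℝ} {a : ι → ι → ℝ} {B : ℝ}

variable (p w r a B) in
noncomputable def opinionField (z : ι → ℝ) (i : ι) : ℝ :=
  -(w i * r i / B) * (z i - p i) + (∑ k, (a i k * r k / B) * (z k - z i)) - (z i) ^ 3 / r i

theorem opinionField_sub_opinionField (x y : ι → ℝ) (i : ι) :
    opinionField p w r a B x i - opinionField p w r a B y i =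
      -(w i * r i / B + ∑ k, a i k * r k / B + (x i ^ 2 + x i * y i + y i ^ 2) / r i)
        * (x i - y i) + ∑ k, a i k * r k / B * (x k - y k) := by
  simp only [opinionField, mul_sub, sum_sub_distrib, ← sum_mul]
  ring

variable (w r a B) in
noncomputable def antagonismMargin (i : ι) : ℝ :=
  w i * r i / B - ∑ k ∈ univ.filter (fun k => a i k < 0), 2 * |a i k| * r k / B

theorem antagonismMargin_le (hr : ∀ i, 0 < r i) (hB : 0 ≤ B) {q : ℝ} (hq : 0 ≤ q) (i : ι) :
    antagonismMargin w r a B i ≤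
      w i * r i / B + ∑ k, a i k * r k / B + q / r i - ∑ k, |a i k * r k / B| := by
  have hneg : ∑ k ∈ univ.filter (fun k => a i k < 0), 2 * |a i k| * r k / B =
      ∑ k, (|a i k * r k / B| - a i k * r k / B) := by
    rw [sum_filter]
    refine sum_congr rfl fun k _ => ?_
    have hrB : 0 ≤ r k / B := div_nonneg (hr k).le hB
    rw [mul_div_assoc (a i k), abs_mul, abs_of_nonneg hrB]
    split_ifs with hk
    · rw [abs_of_neg hk]; ring
    · rw [abs_of_nonneg (not_lt.1 hk)]; ring
  rw [antagonismMargin, hneg, sum_sub_distrib]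
  linarith [div_nonneg hq (hr i).le]

variable {α : ℝ}

theorem isOneSidedLipschitzSup_opinionField (hr : ∀ i, 0 < r i) (hB : 0 ≤ B)
    (hα : ∀ i, α ≤ antagonismMargin w r a B i) :
    IsOneSidedLipschitzSup (opinionField p w r a B) (-α) := fun x y i hi => by
  rw [opinionField_sub_opinionField]
  have hq : 0 ≤ x i ^ 2 + x i * y i + y i ^ 2 := by nlinarith [sq_nonneg (x i + y i)]
  exact mul_neg_mul_add_sum_le ((hα i).trans (antagonismMargin_le hr hB hq i)) hi

theorem norm_add_smul_opinionField_sub_le (hr : ∀ i, 0 < r i) (hB : 0 ≤ B)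
    (hα : ∀ i, α ≤ antagonismMargin w r a B i)
    {R h : ℝ} (hh : 0 ≤ h) (hhα : h * α ≤ 1)
    (hhR : ∀ i, h * (w i * r i / B + ∑ k, a i k * r k / B + 3 * R ^ 2 / r i) ≤ 1)
    {x y : ι → ℝ} (hx : ‖x‖ ≤ R) (hy : ‖y‖ ≤ R) :
    ‖(x + h • opinionField p w r a B x) - (y + h • opinionField p w r a B y)‖ ≤
      (1 - h * α) * ‖x - y‖ := by
  refine (pi_norm_le_iff_of_nonneg (mul_nonneg (by linarith) (norm_nonneg _))).2 fun i => ?_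
  have hxi : |x i| ≤ R := (norm_le_pi_norm x i).trans hx
  have hyi : |y i| ≤ R := (norm_le_pi_norm y i).trans hy
  have hq : 0 ≤ x i ^ 2 + x i * y i + y i ^ 2 := by nlinarith [sq_nonneg (x i + y i)]
  have hq3 : x i ^ 2 + x i * y i + y i ^ 2 ≤ 3 * R ^ 2 := by
    nlinarith [abs_mul_abs_self (x i), abs_mul_abs_self (y i), abs_mul (x i) (y i),
      le_abs_self (x i * y i), abs_nonneg (x i), abs_nonneg (y i)]
  have hhD : h * (w i * r i / B + ∑ k, a i k * r k / B + (x i ^ 2 + x i * y i + y i ^ 2) / r i)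
      ≤ 1 := by
    refine le_trans ?_ (hhR i)
    gcongr
    exact (hr i).le
  simp only [Pi.sub_apply, Pi.add_apply, Pi.smul_apply, smul_eq_mul, Real.norm_eq_abs,
    add_sub_add_comm, ← mul_sub, opinionField_sub_opinionField]
  exact abs_add_mul_neg_mul_add_sum_le (d := x - y) hh hhD
    ((hα i).trans (antagonismMargin_le hr hB hq i)) (fun k => norm_le_pi_norm (x - y) k) i

theorem exists_opinionField_eq_zero (hr : ∀ i, 0 < r i) (hB : 0 ≤ B) (hα₀ : 0 < α)
    (hα : ∀ i, α ≤ antagonismMargin w r a B i) :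
    ∃ z, opinionField p w r a B z = 0 := by
  set F := opinionField p w r a B
  set R := ‖F 0‖ / α
  have small (c : ℝ) : ∀ᶠ h in 𝓝 (0 : ℝ), h * c ≤ 1 :=
    ((continuous_mul_const c).tendsto' 0 0 (zero_mul c)).eventually (eventually_le_nhds one_pos)
  obtain ⟨h, hh, hhα, hhR⟩ : ∃ h > 0, h * α ≤ 1 ∧
      ∀ i, h * (w i * r i / B + ∑ k, a i k * r k / B + 3 * R ^ 2 / r i) ≤ 1 :=
    ((eventually_mem_nhdsWithin (a := 0) (s := Ioi 0)).and (eventually_nhdsWithin_of_eventually_nhds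
      ((small α).and (eventually_all.2 fun i => small _)))).exists
  have hF₀ : ‖(0 + h • F 0) - 0‖ ≤ (1 - (1 - h * α)) * R := by
    rw [zero_add, sub_zero, norm_smul, Real.norm_eq_abs, abs_of_pos hh]
    exact le_of_eq (by simp only [R]; field_simp; ring)
  obtain ⟨z, -, hz⟩ := exists_fixedPoint_mem_closedBall (G := fun x => x + h • F x)
    (sub_nonneg.2 hhα) (by nlinarith)
    (fun x hx y hy => norm_add_smul_opinionField_sub_le hr hB hα hh.le hhα hhR
      (by simpa using hx) (by simpa using hy)) hF₀
  exact ⟨z, by simpa [hh.ne'] using hz⟩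

end OpinionDynamics

theorem unique_globally_exponentially_stable_equilibrium_general
    (n : ℕ) (p w r : Fin n → ℝ) (a : Fin n → Fin n → ℝ)
    (hr : ∀ i, 0 < r i)
    (B : ℝ) (hB : B = ∑ k, r k)
    (f : (Fin n → ℝ) → Fin n → ℝ)
    (hf : ∀ z i, f z i =
      -(w i * r i / B) * (z i - p i) + (∑ k, (a i k * r k / B) * (z k - z i))
        - (z i) ^ 3 / r i)
    (hweak : ∀ i, (∑ k ∈ univ.filter (fun k => a i k < 0), 2 * |a i k| * r k / B)
      < w i * r i / B) :
    ∃ zstar : Fin n → ℝ, f zstar = 0 ∧ (∀ y : Fin n → ℝ, f y = 0 → y = zstar) ∧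
      ∃ α : ℝ, 0 < α ∧ ∀ z : ℝ → Fin n → ℝ,
        (∀ j, Differentiable ℝ (fun t => z t j)) →
        (∀ t : ℝ, 0 ≤ t → ∀ j, HasDerivAt (fun s => z s j) (f (z t) j) t) →
        ∀ t : ℝ, 0 ≤ t → ‖z t - zstar‖ ≤ Real.exp (-α * t) * ‖z 0 - zstar‖ := by
  obtain rfl : f = opinionField p w r a B := funext fun z => funext (hf z)
  have hB₀ : 0 ≤ B := hB ▸ sum_nonneg fun k _ => (hr k).le
  obtain ⟨α, hα₀, hα⟩ := exists_pos_forall_le fun i => sub_pos.2 (hweak i)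
  have hF := isOneSidedLipschitzSup_opinionField (p := p) hr hB₀ hα
  obtain ⟨zstar, hzstar⟩ := exists_opinionField_eq_zero (p := p) hr hB₀ hα₀ hα
  refine ⟨zstar, hzstar, fun y hy => hF.injective (neg_neg_of_pos hα₀) (hy.trans hzstar.symm),
    α, hα₀, fun z _ hz t ht => ?_⟩
  simpa using hF.norm_sub_le_exp_mul hz (y := fun _ => zstar)
    (fun s _ k => by simpa [hzstar] using hasDerivAt_const s (zstar k)) ht

/-- Existence and uniqueness of a globally exponentially stable equilibrium under the
weak antagonistic relations assumption. The norm on `Fin n → ℝ` is the sup norm. -/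
theorem unique_globally_exponentially_stable_equilibrium
    (n : ℕ) (p w r : Fin n → ℝ) (a : Fin n → Fin n → ℝ)
    (hw : ∀ i, 0 < w i) (hr : ∀ i, 0 < r i)
    (B : ℝ) (hB : B = ∑ k, r k)
    (f : (Fin n → ℝ) → Fin n → ℝ)
    (hf : ∀ z i, f z i =
      -(w i * r i / B) * (z i - p i) + (∑ k, (a i k * r k / B) * (z k - z i))
        - (z i) ^ 3 / r i)
    (hweak : ∀ i, (∑ k ∈ univ.filter (fun k => a i k < 0), 2 * |a i k| * r k / B)
      < w i * r i / B) :
    ∃ zstar : Fin n → ℝ, f zstar = 0 ∧ (∀ y : Fin n → ℝ, f y = 0 → y = zstar) ∧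
      ∃ α : ℝ, 0 < α ∧ ∀ z : ℝ → Fin n → ℝ,
        (∀ j, Differentiable ℝ (fun t => z t j)) →
        (∀ t : ℝ, 0 ≤ t → ∀ j, HasDerivAt (fun s => z s j) (f (z t) j) t) →
        ∀ t : ℝ, 0 ≤ t → ‖z t - zstar‖ ≤ Real.exp (-α * t) * ‖z 0 - zstar‖ :=
  unique_globally_exponentially_stable_equilibrium_general n p w r a hr B hB f hf hweak
end

section
/- (Interior equilibrium characterization via directed walks) Suppose a_{ik} ≥ 0 for all i,k (no antagonistic relations) and m_min < m_max, where m_min := min_i m_i and m_max := max_i m_i. Let z* be an equilibrium point of the opinion dynamics (f(z*) = 0). Define the influence relation R on agents by R(u,v) iff a_{vu} ≠ 0 (an arc from u to v), and let V_max := {i : m_i = m_max}, V_min := {i : m_i = m_min}. Then m_min < z*_i < m_max for all i (z* lies in the open box) if and only if: for every i ∈ V_max there exists j ∉ V_max with a directed walk from j to i (i.e. the transitive closure of R relates j to i), and for every i ∈ V_min there exists j ∉ V_min with a directed walk from j to i. -/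
/-!
At an equilibrium, `S i (z i) = ∑ k, c i k * (z i - z k)` with `c ≥ 0` and `S i` strictly
decreasing with root `m i`. Hence an agent that is at least (at most) as high as all its
in-neighbours satisfies `z i ≤ m i` (`m i ≤ z i`); this gives `z ≤ max m`, and on a set closed
under in-neighbours the lowest agent satisfies `m ≤ z`. If no agent outside `V_max` reaches
`i ∈ V_max`, then `i` and its ancestors form such a set inside `V_max`, whose lowest agent sits
at `max m`. Conversely, an agent with `z i = max m` forces `m i = max m`, makes the coupling sum
vanish, and so pushes the value `max m` onto all its in-neighbours and, along walks, onto all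
its ancestors, which then lie in `V_max`. The bottom is the mirror image under `z ↦ -z`.
-/

open Finset Relation

lemma strictAnti_neg_mul_sub_sub_pow_three_div {κ p r : ℝ} (hκ : 0 ≤ κ) (hr : 0 < r) :
    StrictAnti fun x : ℝ => -κ * (x - p) - x ^ 3 / r := by
  intro x y hxy
  have hcube : x ^ 3 / r < y ^ 3 / r :=
    div_lt_div_of_pos_right (Odd.strictMono_pow (by decide) hxy) hr
  nlinarith [mul_le_mul_of_nonneg_left hxy.le hκ]

lemma Relation.TransGen.mem_of_forall_mem_imp {α : Type*} {r : α → α → Prop} {s : Set α}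
    (hs : ∀ a b, r a b → b ∈ s → a ∈ s) {a b : α} (h : TransGen r a b) (hb : b ∈ s) :
    a ∈ s := by
  induction h with
  | single hab => exact hs _ _ hab hb
  | tail _ hbc ih => exact ih (hs _ _ hbc hb)

section CouplingSum

variable {ι : Type*} [Fintype ι] {c z : ι → ℝ} {x : ℝ}

lemma mul_sub_nonpos_of_ne_zero_imp {a y : ℝ} (ha : 0 ≤ a) (h : a ≠ 0 → y ≤ x) :
    a * (y - x) ≤ 0 := by
  rcases eq_or_ne a 0 with rfl | ha0
  · simp
  · exact mul_nonpos_of_nonneg_of_nonpos ha (sub_nonpos.2 (h ha0))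

lemma sum_mul_sub_nonpos (hc : ∀ k, 0 ≤ c k) (h : ∀ k, c k ≠ 0 → z k ≤ x) :
    ∑ k, c k * (z k - x) ≤ 0 :=
  sum_nonpos fun k _ => mul_sub_nonpos_of_ne_zero_imp (hc k) (h k)

lemma sum_mul_sub_nonneg (hc : ∀ k, 0 ≤ c k) (h : ∀ k, c k ≠ 0 → x ≤ z k) :
    0 ≤ ∑ k, c k * (z k - x) := by
  refine sum_nonneg fun k _ => ?_
  rcases eq_or_ne (c k) 0 with hk | hk
  · simp [hk]
  · exact mul_nonneg (hc k) (sub_nonneg.2 (h k hk))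

lemma eq_of_sum_mul_sub_eq_zero (hc : ∀ k, 0 ≤ c k) (h : ∀ k, c k ≠ 0 → z k ≤ x)
    (hsum : ∑ k, c k * (z k - x) = 0) {k : ι} (hk : c k ≠ 0) : z k = x := by
  have hterm := (sum_eq_zero_iff_of_nonpos fun j _ => mul_sub_nonpos_of_ne_zero_imp (hc j) (h j)).1
    hsum k (mem_univ k)
  exact sub_eq_zero.1 ((mul_eq_zero.1 hterm).resolve_left hk)

end CouplingSum

namespace OpinionDynamics

variable {ι : Type*} [Fintype ι] {S : ι → ℝ → ℝ} {c : ι → ι → ℝ} {m z : ι → ℝ}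

def IsEquilibrium (S : ι → ℝ → ℝ) (c : ι → ι → ℝ) (z : ι → ℝ) : Prop :=
  ∀ i, S i (z i) + ∑ k, c i k * (z k - z i) = 0

namespace IsEquilibrium

lemma le_root_of_forall_neighbour_le (he : IsEquilibrium S c z) {i : ι} (hS : StrictAnti (S i))
    (hm : S i (m i) = 0) (hc : ∀ k, 0 ≤ c i k) (h : ∀ k, c i k ≠ 0 → z k ≤ z i) : z i ≤ m i := by
  have := sum_mul_sub_nonpos hc h
  exact hS.le_iff_ge.1 (by linarith [he i])

lemma root_le_of_forall_le_neighbour (he : IsEquilibrium S c z) {i : ι} (hS : StrictAnti (S i))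
    (hm : S i (m i) = 0) (hc : ∀ k, 0 ≤ c i k) (h : ∀ k, c i k ≠ 0 → z i ≤ z k) : m i ≤ z i := by
  have := sum_mul_sub_nonneg hc h
  exact hS.le_iff_ge.1 (by linarith [he i])

lemma le_of_forall_root_le (he : IsEquilibrium S c z) (hS : ∀ i, StrictAnti (S i))
    (hm : ∀ i, S i (m i) = 0) (hc : ∀ i k, 0 ≤ c i k) {M : ℝ} (hmM : ∀ i, m i ≤ M) (k : ι) :
    z k ≤ M := by
  have : Nonempty ι := ⟨k⟩
  obtain ⟨v, hv⟩ := Finite.exists_max z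
  calc z k ≤ z v := hv k
    _ ≤ m v := he.le_root_of_forall_neighbour_le (hS v) (hm v) (hc v) fun j _ => hv j
    _ ≤ M := hmM v

lemma exists_root_le_of_neighbour_closed (he : IsEquilibrium S c z) (hS : ∀ i, StrictAnti (S i))
    (hm : ∀ i, S i (m i) = 0) (hc : ∀ i k, 0 ≤ c i k) {s : Set ι} (hs : s.Nonempty)
    (hcl : ∀ j ∈ s, ∀ k, c j k ≠ 0 → k ∈ s) : ∃ v ∈ s, m v ≤ z v := by
  obtain ⟨v, hvs, hv⟩ := Set.exists_min_image s z s.toFinite hs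
  exact ⟨v, hvs, he.root_le_of_forall_le_neighbour (hS v) (hm v) (hc v)
    fun k hk => hv k (hcl v hvs k hk)⟩

lemma root_eq_and_forall_neighbour_eq_of_eq (he : IsEquilibrium S c z)
    (hS : ∀ i, StrictAnti (S i)) (hm : ∀ i, S i (m i) = 0) (hc : ∀ i k, 0 ≤ c i k) {M : ℝ}
    (hmM : ∀ i, m i ≤ M) {v : ι} (hv : z v = M) : m v = M ∧ ∀ u, c v u ≠ 0 → z u = M := by
  have hnb : ∀ k, c v k ≠ 0 → z k ≤ z v := fun k _ => hv ▸ he.le_of_forall_root_le hS hm hc hmM k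
  have hmv : m v = M :=
    le_antisymm (hmM v) (hv ▸ he.le_root_of_forall_neighbour_le (hS v) (hm v) (hc v) hnb)
  have hSv : S v (z v) = 0 := by rw [hv, ← hmv, hm v]
  have hsum : ∑ k, c v k * (z k - z v) = 0 := by linarith [he v]
  exact ⟨hmv, fun u hu => (eq_of_sum_mul_sub_eq_zero (hc v) hnb hsum hu).trans hv⟩

theorem forall_lt_iff_exists_transGen (he : IsEquilibrium S c z) (hS : ∀ i, StrictAnti (S i))
    (hm : ∀ i, S i (m i) = 0) (hc : ∀ i k, 0 ≤ c i k) {M : ℝ} (hmM : ∀ i, m i ≤ M) :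
    (∀ i, z i < M) ↔
      ∀ i, m i = M → ∃ j, m j ≠ M ∧ TransGen (fun u v => c v u ≠ 0) j i := by
  constructor
  · intro hlt i hi
    by_contra! hno
    obtain ⟨v, hvs, hv⟩ := he.exists_root_le_of_neighbour_closed hS hm hc
      (s := {j | ReflTransGen (fun u v => c v u ≠ 0) j i}) ⟨i, .refl⟩
      fun j hj k hk => ReflTransGen.head hk hj
    have hmv : m v = M := by
      rcases reflTransGen_iff_eq_or_transGen.1 hvs with rfl | hvi
      · exact hi
      · exact not_not.1 fun hvM => hno v hvM hvi
    linarith [hlt v]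
  · intro hreach i
    refine lt_of_le_of_ne (he.le_of_forall_root_le hS hm hc hmM i) fun hi => ?_
    have htop (v : ι) (hv : z v = M) := he.root_eq_and_forall_neighbour_eq_of_eq hS hm hc hmM hv
    obtain ⟨j, hjM, hji⟩ := hreach i (htop i hi).1
    exact hjM (htop j (hji.mem_of_forall_mem_imp (s := {v | z v = M})
      (fun u v huv hv => (htop v hv).2 u huv) hi)).1

lemma neg (he : IsEquilibrium S c z) : IsEquilibrium (fun i x => -S i (-x)) c (-z) := by
  intro i
  have hflip : ∑ k, c i k * (z i - z k) = -∑ k, c i k * (z k - z i) := by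
    rw [← sum_neg_distrib]
    exact sum_congr rfl fun k _ => by ring
  simp only [Pi.neg_apply, neg_neg, neg_sub_neg, hflip]
  linarith [he i]

theorem forall_gt_iff_exists_transGen (he : IsEquilibrium S c z) (hS : ∀ i, StrictAnti (S i))
    (hm : ∀ i, S i (m i) = 0) (hc : ∀ i k, 0 ≤ c i k) {L : ℝ} (hmL : ∀ i, L ≤ m i) :
    (∀ i, L < z i) ↔
      ∀ i, m i = L → ∃ j, m j ≠ L ∧ TransGen (fun u v => c v u ≠ 0) j i := by
  have := he.neg.forall_lt_iff_exists_transGen (m := -m) (M := -L)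
    (fun i _ _ hxy => neg_lt_neg (hS i (neg_lt_neg hxy))) (by simpa using hm) hc
    (fun i => neg_le_neg (hmL i))
  simpa [neg_inj] using this

end IsEquilibrium

end OpinionDynamics

open OpinionDynamics in
theorem interior_equilibrium_iff_directed_walks_general
    (n : ℕ) (hn : 0 < n) (p w r : Fin n → ℝ) (a : Fin n → Fin n → ℝ)
    (hw : ∀ i, 0 < w i) (hr : ∀ i, 0 < r i)
    (B : ℝ) (hB : B = ∑ k, r k)
    (hpos : ∀ i k, 0 ≤ a i k)
    (f : (Fin n → ℝ) → Fin n → ℝ)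
    (hf : ∀ z i, f z i =
      -(w i * r i / B) * (z i - p i) + (∑ k, (a i k * r k / B) * (z k - z i))
        - (z i) ^ 3 / r i)
    (m : Fin n → ℝ)
    (hm : ∀ i, -(w i * r i / B) * (m i - p i) - (m i) ^ 3 / r i = 0)
    (zstar : Fin n → ℝ) (heq : f zstar = 0) :
    (∀ i, (⨅ j, m j) < zstar i ∧ zstar i < ⨆ j, m j) ↔
      ((∀ i, m i = (⨆ j, m j) →
          ∃ j, m j ≠ (⨆ j', m j') ∧
            Relation.TransGen (fun u v => a v u ≠ 0) j i) ∧
       (∀ i, m i = (⨅ j, m j) →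
          ∃ j, m j ≠ (⨅ j', m j') ∧
            Relation.TransGen (fun u v => a v u ≠ 0) j i)) := by
  have hBpos : 0 < B := hB ▸ sum_pos (fun k _ => hr k) ⟨⟨0, hn⟩, mem_univ _⟩
  set c : Fin n → Fin n → ℝ := fun i k => a i k * r k / B
  have he : IsEquilibrium (fun i x => -(w i * r i / B) * (x - p i) - x ^ 3 / r i) c zstar :=
    fun i => by
      have hfi := hf zstar i
      rw [heq, Pi.zero_apply] at hfi
      dsimp only [c]
      linarith
  have hS (i : Fin n) : StrictAnti fun x => -(w i * r i / B) * (x - p i) - x ^ 3 / r i :=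
    strictAnti_neg_mul_sub_sub_pow_three_div (div_pos (mul_pos (hw i) (hr i)) hBpos).le (hr i)
  have hc (i k : Fin n) : 0 ≤ c i k := div_nonneg (mul_nonneg (hpos i k) (hr k).le) hBpos.le
  have hgraph : (fun u v => c v u ≠ 0) = fun u v => a v u ≠ 0 := by
    ext u v
    simp [c, hBpos.ne', (hr u).ne']
  rw [forall_and, he.forall_gt_iff_exists_transGen hS hm hc (ciInf_le (Finite.bddBelow_range m)),
    he.forall_lt_iff_exists_transGen hS hm hc (le_ciSup (Finite.bddAbove_range m)), hgraph]
  exact and_comm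

/-- Interior equilibrium characterization via directed walks: without antagonistic
relations and with `m_min < m_max`, an equilibrium lies in the open consensus box iff
every agent in `V_max` (resp. `V_min`) is reachable by a directed walk in the
influence graph from some agent outside `V_max` (resp. `V_min`). The influence
relation `R u v` holds iff `a v u ≠ 0` (an arc from `u` to `v`); directed walks
correspond to the transitive closure of `R`. -/
theorem interior_equilibrium_iff_directed_walks
    (n : ℕ) (hn : 0 < n) (p w r : Fin n → ℝ) (a : Fin n → Fin n → ℝ)
    (hw : ∀ i, 0 < w i) (hr : ∀ i, 0 < r i)
    (B : ℝ) (hB : B = ∑ k, r k)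
    (hpos : ∀ i k, 0 ≤ a i k)
    (f : (Fin n → ℝ) → Fin n → ℝ)
    (hf : ∀ z i, f z i =
      -(w i * r i / B) * (z i - p i) + (∑ k, (a i k * r k / B) * (z k - z i))
        - (z i) ^ 3 / r i)
    (m : Fin n → ℝ)
    (hm : ∀ i, -(w i * r i / B) * (m i - p i) - (m i) ^ 3 / r i = 0)
    (hlt : (⨅ j, m j) < ⨆ j, m j)
    (zstar : Fin n → ℝ) (heq : f zstar = 0) :
    (∀ i, (⨅ j, m j) < zstar i ∧ zstar i < ⨆ j, m j) ↔
      ((∀ i, m i = (⨆ j, m j) →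
          ∃ j, m j ≠ (⨆ j', m j') ∧
            Relation.TransGen (fun u v => a v u ≠ 0) j i) ∧
       (∀ i, m i = (⨅ j, m j) →
          ∃ j, m j ≠ (⨅ j', m j') ∧
            Relation.TransGen (fun u v => a v u ≠ 0) j i)) :=
  interior_equilibrium_iff_directed_walks_general n hn p w r a hw hr B hB hpos f hf m hm zstar heq
end

section
/- (Consensus deviation from preference) Suppose p_i ≠ 0 for every i, and suppose ξ·1 is an equilibrium point of the opinion dynamics for some ξ ∈ ℝ. Define the consensus dominance weights σ_i := w_i·r_i² and deviations Δ_i := |p_i − ξ|. Then σ_i·Δ_i = σ_j·Δ_j for all i,j ∈ {1,…,n}; in particular, for all i,j: σ_i > σ_j if and only if Δ_i < Δ_j. -/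
open Finset

/-!
At a consensus `ξ·1` the coupling terms `z_k - z_i` vanish, so the equilibrium condition
decouples into one equation per agent, `w_i r_i² (p_i - ξ) = B ξ³`. Taking absolute values,
`σ_i Δ_i = B |ξ|³` for every `i`. Since some `p_i ≠ 0`, `ξ = 0` is impossible, so this common
value is positive, and then a larger weight forces a smaller deviation.
-/

theorem lt_iff_lt_of_mul_eq_mul {α : Type*} [CommSemiring α] [LinearOrder α]
    [IsStrictOrderedRing α] {a b c d : α} (ha : 0 < a) (hd : 0 < d) (h : a * c = b * d) :
    b < a ↔ c < d :=
  ⟨fun hba => lt_of_mul_lt_mul_left (h ▸ mul_lt_mul_of_pos_right hba hd) ha.le,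
    fun hcd => lt_of_mul_lt_mul_right (h ▸ mul_lt_mul_of_pos_left hcd ha) hd.le⟩

theorem mul_sq_mul_sub_eq_of_consensus_equilibrium {w r p B ξ : ℝ} (hr : r ≠ 0) (hB : B ≠ 0)
    (h : -(w * r / B) * (ξ - p) - ξ ^ 3 / r = 0) : w * r ^ 2 * (p - ξ) = B * ξ ^ 3 := by
  field_simp at h
  linear_combination h

/-- Consensus deviation from preference: if all preferences are non-zero and `ξ·1` is
an equilibrium, then the products `σ_i Δ_i` of consensus dominance weights
`σ_i = w_i r_i²` and deviations `Δ_i = |p_i − ξ|` are the same for all agents; in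
particular `σ_i > σ_j ↔ Δ_i < Δ_j`. -/
theorem consensus_dominance
    (n : ℕ) (p w r : Fin n → ℝ) (a : Fin n → Fin n → ℝ)
    (hw : ∀ i, 0 < w i) (hr : ∀ i, 0 < r i)
    (B : ℝ) (hB : B = ∑ k, r k)
    (f : (Fin n → ℝ) → Fin n → ℝ)
    (hf : ∀ z i, f z i =
      -(w i * r i / B) * (z i - p i) + (∑ k, (a i k * r k / B) * (z k - z i))
        - (z i) ^ 3 / r i)
    (hp : ∀ i, p i ≠ 0)
    (ξ : ℝ) (heq : f (fun _ => ξ) = 0) :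
    ∀ i j : Fin n,
      (w i * (r i) ^ 2) * |p i - ξ| = (w j * (r j) ^ 2) * |p j - ξ| ∧
      ((w j * (r j) ^ 2) < (w i * (r i) ^ 2) ↔ |p i - ξ| < |p j - ξ|) := by
  intro i j
  have hBpos : 0 < B := hB ▸ sum_pos (fun k _ => hr k) ⟨i, mem_univ i⟩
  have hσ (k : Fin n) : 0 < w k * r k ^ 2 := mul_pos (hw k) (pow_pos (hr k) 2)
  have hbalance (k : Fin n) : w k * r k ^ 2 * (p k - ξ) = B * ξ ^ 3 := by
    have hk := congrFun heq k
    simp only [hf, sub_self, mul_zero, sum_const_zero, add_zero, Pi.zero_apply] at hk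
    exact mul_sq_mul_sub_eq_of_consensus_equilibrium (hr k).ne' hBpos.ne' hk
  have hξ : ξ ≠ 0 := by
    rintro rfl
    simpa [(hσ i).ne', hp i] using hbalance i
  have habs (k : Fin n) : w k * r k ^ 2 * |p k - ξ| = B * |ξ| ^ 3 := by
    rw [← abs_of_pos (hσ k), ← abs_mul, hbalance k, abs_mul, abs_pow, abs_of_pos hBpos]
  have hij := (habs i).trans (habs j).symm
  have hΔj : 0 < |p j - ξ| :=
    pos_of_mul_pos_right (habs j ▸ by positivity) (hσ j).le
  exact ⟨hij, lt_iff_lt_of_mul_eq_mul (hσ i) hΔj hij⟩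
end

section
/- (Convexity of the cost function) Suppose a_{ik} ≥ 0 for all i,k (no antagonistic relations). Then for every agent i, the cost function χ_i(z) := −U_i(z) is convex on ℝⁿ, and the consensus profile m_i·1 (every coordinate equal to m_i, the unique real root of the self function S_i) is a global minimizer of χ_i, i.e. χ_i(m_i·1) ≤ χ_i(z) for all z ∈ ℝⁿ. -/
/-!
The cost `χ_i` is a nonnegative combination of squares of linear forms plus the even quartic
`z_i⁴ / (4 r_i)`, hence convex. At a consensus profile the disagreement terms vanish, and what is
left is a convex function of `z_i` alone whose derivative is `-S_i`, so it is minimised at the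
root `m_i`; the disagreement terms are nonnegative everywhere.
-/

open Finset

theorem ConvexOn.fun_sum {𝕜 E β ι : Type*} [Semiring 𝕜] [PartialOrder 𝕜] [AddCommMonoid E]
    [AddCommMonoid β] [PartialOrder β] [IsOrderedAddMonoid β] [SMul 𝕜 E] [DistribMulAction 𝕜 β]
    {S : Set E} (hS : Convex 𝕜 S) {t : Finset ι} {f : ι → E → β}
    (hf : ∀ k ∈ t, ConvexOn 𝕜 S (f k)) : ConvexOn 𝕜 S fun x => ∑ k ∈ t, f k x := by
  classical
  induction t using Finset.induction_on with
  | empty => exact ⟨hS, fun _ _ _ _ a b _ _ _ => by simp⟩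
  | insert k t hk ih =>
    simp_rw [sum_insert hk]
    exact (hf k (mem_insert_self k t)).add (ih fun l hl => hf l (mem_insert_of_mem hl))

theorem ConvexOn.isMinOn_of_hasDerivAt {S : Set ℝ} {f : ℝ → ℝ} {x : ℝ} (hf : ConvexOn ℝ S f)
    (hx : x ∈ interior S) (hd : HasDerivAt f 0 x) : IsMinOn f S x :=
  hf.isMinOn_of_rightDeriv_eq_zero hx
    (hd.hasDerivWithinAt.derivWithin (uniqueDiffWithinAt_Ioi x))

theorem convexOn_sum_mul_sq_sub {ι : Type*} [Fintype ι] {c : ι → ℝ} (hc : ∀ k, 0 ≤ c k) (i : ι) :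
    ConvexOn ℝ Set.univ fun z : ι → ℝ => ∑ k, c k * (z k - z i) ^ 2 :=
  ConvexOn.fun_sum convex_univ fun k _ => by
    have hsq : ConvexOn ℝ Set.univ fun z : ι → ℝ => (z k - z i) ^ 2 :=
      (Even.convexOn_pow even_two).comp_linearMap
        (LinearMap.proj (R := ℝ) (φ := fun _ : ι => ℝ) k - LinearMap.proj i)
    exact hsq.smul (hc k)

theorem convexOn_mul_sq_sub_add_mul_pow_four {A c : ℝ} (hA : 0 ≤ A) (hc : 0 ≤ c) (p : ℝ) :
    ConvexOn ℝ Set.univ fun x : ℝ => A * (x - p) ^ 2 + c * x ^ 4 :=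
  (((Even.convexOn_pow even_two).comp_affineMap
      (AffineMap.id ℝ ℝ - AffineMap.const ℝ ℝ p)).smul hA).add
    ((Even.convexOn_pow (even_two_mul 2)).smul hc)

theorem isMinOn_mul_sq_sub_add_mul_pow_four {A c p m : ℝ} (hA : 0 ≤ A) (hc : 0 ≤ c)
    (hm : 2 * A * (m - p) + 4 * c * m ^ 3 = 0) :
    IsMinOn (fun x => A * (x - p) ^ 2 + c * x ^ 4) Set.univ m := by
  refine (convexOn_mul_sq_sub_add_mul_pow_four hA hc p).isMinOn_of_hasDerivAt (by simp) ?_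
  have hd := ((((hasDerivAt_id' m).sub_const p).fun_pow 2).const_mul A).add
    ((hasDerivAt_pow 4 m).const_mul c)
  exact hd.congr_deriv (by simp only [Nat.cast_ofNat]; linear_combination hm)

/-- Convexity of the cost function: in the absence of antagonistic relations, each
cost `χ_i = −U_i` is convex on `ℝⁿ` and the consensus profile `m_i·1` is a global
minimizer of `χ_i`. -/
theorem cost_function_convex_with_consensus_minimizer
    (n : ℕ) (p w r : Fin n → ℝ) (a : Fin n → Fin n → ℝ)
    (hw : ∀ i, 0 < w i) (hr : ∀ i, 0 < r i)
    (B : ℝ) (hB : B = ∑ k, r k)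
    (hpos : ∀ i k, 0 ≤ a i k)
    (χ : Fin n → (Fin n → ℝ) → ℝ)
    (hχ : ∀ i z, χ i z =
      -(-(w i * r i / (2 * B)) * (z i - p i) ^ 2
        - (1 / 2) * (∑ k, (a i k * r k / B) * (z k - z i) ^ 2)
        - (z i) ^ 4 / (4 * r i)))
    (m : Fin n → ℝ)
    (hm : ∀ i, -(w i * r i / B) * (m i - p i) - (m i) ^ 3 / r i = 0) :
    ∀ i, ConvexOn ℝ Set.univ (χ i) ∧
      ∀ z : Fin n → ℝ, χ i (fun _ => m i) ≤ χ i z := by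
  intro i
  have hBpos : 0 < B := hB ▸ sum_pos (fun k _ => hr k) ⟨i, mem_univ i⟩
  have hA : 0 ≤ w i * r i / (2 * B) := by have := hw i; have := hr i; positivity
  have hc : 0 ≤ 1 / (4 * r i) := by have := hr i; positivity
  have hdis : ∀ k, 0 ≤ a i k * r k / B := fun k => by have := hpos i k; have := hr k; positivity
  set g : ℝ → ℝ := fun x => w i * r i / (2 * B) * (x - p i) ^ 2 + 1 / (4 * r i) * x ^ 4
  set D : (Fin n → ℝ) → ℝ := fun z => ∑ k, a i k * r k / B * (z k - z i) ^ 2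
  have hχi : χ i = fun z => g (z i) + (1 / 2 : ℝ) • D z := funext fun z => by
    rw [hχ]; simp only [g, D, smul_eq_mul]; ring
  refine ⟨hχi ▸ ?_, fun z => ?_⟩
  · exact ((convexOn_mul_sq_sub_add_mul_pow_four hA hc (p i)).comp_linearMap
      (LinearMap.proj i)).add ((convexOn_sum_mul_sq_sub hdis i).smul one_half_pos.le)
  · have hmin : g (m i) ≤ g (z i) := isMinOn_mul_sq_sub_add_mul_pow_four hA hc (by
      linear_combination (-1 : ℝ) * hm i) (Set.mem_univ (z i))
    have hD : 0 ≤ D z := sum_nonneg fun k _ => mul_nonneg (hdis k) (sq_nonneg _)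
    have hD0 : D (fun _ => m i) = 0 := by simp [D]
    simp only [hχi, hD0, smul_eq_mul]
    linarith
end

section
/- (Bounds on prices of anarchy via satisfaction ratios) Suppose a_{ik} ≥ 0 for all i,k (no antagonistic relations) and p_i ≠ 0 for every i. Let z* be a Nash equilibrium of the opinion formation game. Then for every y ∈ ℝⁿ: (max_{i} χ_i(z*)) ≤ (max_{i} χ_i(z*)/χ_i(m_i·1)) · (max_{i} χ_i(y)), and (∑_{i} χ_i(z*)) ≤ (∑_{i} χ_i(z*)/χ_i(m_i·1)) · (∑_{i} χ_i(y)); here χ_i(m_i·1) > 0, the ratios χ_i(z*)/χ_i(m_i·1) are the satisfaction ratios SR_i(z*), and these inequalities bound the egalitarian and utilitarian prices of anarchy by max_i SR_i(z*) and ∑_i SR_i(z*) respectively. -/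
open Finset

/-!
Split `χ_i` into the self cost `(c_i/2)(z_i - p_i)² + z_i⁴/(4r_i)`, with `c_i = w_i r_i/B`,
and the network term `½ ∑_k (a_{ik} r_k/B)(z_k - z_i)²`. The network term is nonnegative
because `a_{ik} ≥ 0` and vanishes at constant profiles, while the self cost is convex with
critical point `m_i`; so `χ_i(m_i·1)` is the global minimum of `χ_i`. Hence
`χ_i(z*) = SR_i(z*) χ_i(m_i·1) ≤ SR_i(z*) χ_i(y)` for every `y`, and taking maxima or sums
gives the two inequalities. Positivity of `χ_i(m_i·1)` comes from `m_i ≠ 0`, which follows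
from `p_i ≠ 0`.
-/

-- With `c = w r / B`, the self function `S` is `-∂ₓ selfCost`, so `m` is its critical point.
noncomputable def selfCost (c p r x : ℝ) : ℝ := c / 2 * (x - p) ^ 2 + x ^ 4 / (4 * r)

section SelfCost

variable {c p r m : ℝ}

lemma selfCost_sub_selfCost (c p r m x : ℝ) :
    selfCost c p r x - selfCost c p r m =
      c / 2 * (x - m) ^ 2 + (x - m) ^ 2 * ((x + m) ^ 2 + 2 * m ^ 2) / (4 * r)
        + (c * (m - p) + m ^ 3 / r) * (x - m) := by
  unfold selfCost
  ring

lemma selfCost_le_selfCost (hc : 0 ≤ c) (hr : 0 ≤ r) (hm : c * (m - p) + m ^ 3 / r = 0)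
    (x : ℝ) : selfCost c p r m ≤ selfCost c p r x := by
  have h := selfCost_sub_selfCost c p r m x
  rw [hm, zero_mul, add_zero] at h
  have : 0 ≤ selfCost c p r x - selfCost c p r m := by rw [h]; positivity
  linarith

lemma selfCost_pos (hc : 0 < c) (hr : 0 < r) (hp : p ≠ 0) (hm : c * (m - p) + m ^ 3 / r = 0) :
    0 < selfCost c p r m := by
  have hm0 : m ≠ 0 := by
    rintro rfl
    have : c * p = 0 := by linear_combination -hm
    exact hp ((mul_eq_zero.mp this).resolve_left hc.ne')
  unfold selfCost
  positivity

end SelfCost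

section Aggregation

variable {ι : Type*} {f g h : ι → ℝ}

lemma Real.iSup_le_iSup_mul_iSup [Finite ι] (hg : ∀ i, 0 ≤ g i) (hh : ∀ i, 0 ≤ h i)
    (hfgh : ∀ i, f i ≤ g i * h i) : ⨆ i, f i ≤ (⨆ i, g i) * ⨆ i, h i :=
  Real.iSup_le
    (fun i => (hfgh i).trans <| mul_le_mul (le_ciSup (Finite.bddAbove_range g) i)
      (le_ciSup (Finite.bddAbove_range h) i) (hh i) (Real.iSup_nonneg hg))
    (mul_nonneg (Real.iSup_nonneg hg) (Real.iSup_nonneg hh))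

lemma Finset.sum_le_sum_mul_sum [Fintype ι] (hg : ∀ i, 0 ≤ g i) (hh : ∀ i, 0 ≤ h i)
    (hfgh : ∀ i, f i ≤ g i * h i) : ∑ i, f i ≤ (∑ i, g i) * ∑ i, h i :=
  calc ∑ i, f i ≤ ∑ i, g i * h i := sum_le_sum fun i _ => hfgh i
    _ ≤ ∑ i, g i * ∑ j, h j :=
      sum_le_sum fun i _ =>
        mul_le_mul_of_nonneg_left (single_le_sum (fun j _ => hh j) (mem_univ i)) (hg i)
    _ = (∑ i, g i) * ∑ i, h i := (sum_mul ..).symm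

end Aggregation

lemma le_div_mul_of_le {x μ y : ℝ} (hx : 0 ≤ x) (hμ : 0 < μ) (hμy : μ ≤ y) : x ≤ x / μ * y :=
  calc x = x / μ * μ := (div_mul_cancel₀ x hμ.ne').symm
    _ ≤ x / μ * y := mul_le_mul_of_nonneg_left hμy (div_nonneg hx hμ.le)

theorem price_of_anarchy_bounds_general
    (n : ℕ) (p w r : Fin n → ℝ) (a : Fin n → Fin n → ℝ)
    (hw : ∀ i, 0 < w i) (hr : ∀ i, 0 < r i)
    (B : ℝ) (hB : B = ∑ k, r k)
    (hpos : ∀ i k, 0 ≤ a i k)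
    (hp : ∀ i, p i ≠ 0)
    (U : Fin n → (Fin n → ℝ) → ℝ)
    (hU : ∀ i z, U i z =
      -(w i * r i / (2 * B)) * (z i - p i) ^ 2
        - (1 / 2) * (∑ k, (a i k * r k / B) * (z k - z i) ^ 2)
        - (z i) ^ 4 / (4 * r i))
    (χ : Fin n → (Fin n → ℝ) → ℝ) (hχ : ∀ i z, χ i z = -U i z)
    (m : Fin n → ℝ)
    (hm : ∀ i, -(w i * r i / B) * (m i - p i) - (m i) ^ 3 / r i = 0)
    (zstar : Fin n → ℝ) :
    (∀ i, 0 < χ i (fun _ => m i)) ∧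
    ∀ y : Fin n → ℝ,
      (⨆ i, χ i zstar) ≤ (⨆ i, χ i zstar / χ i (fun _ => m i)) * (⨆ i, χ i y) ∧
      (∑ i, χ i zstar) ≤ (∑ i, χ i zstar / χ i (fun _ => m i)) * (∑ i, χ i y) := by
  have hB_pos : ∀ i, 0 < B := fun i =>
    hB ▸ (hr i).trans_le (single_le_sum (fun k _ => (hr k).le) (mem_univ i))
  have hc : ∀ i, 0 < w i * r i / B := fun i => div_pos (mul_pos (hw i) (hr i)) (hB_pos i)
  have hcrit : ∀ i, w i * r i / B * (m i - p i) + m i ^ 3 / r i = 0 := fun i => by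
    linear_combination -hm i
  have hχ_split : ∀ i z, χ i z = selfCost (w i * r i / B) (p i) (r i) (z i)
      + 1 / 2 * ∑ k, a i k * r k / B * (z k - z i) ^ 2 := fun i z => by
    rw [hχ, hU, selfCost]; ring
  have hχ_const : ∀ i, χ i (fun _ => m i) = selfCost (w i * r i / B) (p i) (r i) (m i) :=
    fun i => by simp [hχ_split]
  have hχ_min : ∀ i z, χ i (fun _ => m i) ≤ χ i z := fun i z => by
    have hnet : 0 ≤ ∑ k, a i k * r k / B * (z k - z i) ^ 2 := sum_nonneg fun k _ => by
      have := hpos i k; have := hr k; have := hB_pos i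
      positivity
    rw [hχ_const, hχ_split]
    linarith [selfCost_le_selfCost (hc i).le (hr i).le (hcrit i) (z i)]
  have hχ_pos : ∀ i, 0 < χ i (fun _ => m i) := fun i => by
    rw [hχ_const]; exact selfCost_pos (hc i) (hr i) (hp i) (hcrit i)
  have hχ_nonneg : ∀ y i, 0 ≤ χ i y := fun y i => ((hχ_pos i).trans_le (hχ_min i y)).le
  have hSR_nonneg : ∀ i, 0 ≤ χ i zstar / χ i (fun _ => m i) := fun i =>
    div_nonneg (hχ_nonneg zstar i) (hχ_pos i).le
  have hSR : ∀ y i, χ i zstar ≤ χ i zstar / χ i (fun _ => m i) * χ i y := fun y i =>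
    le_div_mul_of_le (hχ_nonneg zstar i) (hχ_pos i) (hχ_min i y)
  exact ⟨hχ_pos, fun y => ⟨Real.iSup_le_iSup_mul_iSup hSR_nonneg (hχ_nonneg y) (hSR y),
    sum_le_sum_mul_sum hSR_nonneg (hχ_nonneg y) (hSR y)⟩⟩

/-- Bounds on the egalitarian and utilitarian prices of anarchy via satisfaction
ratios: at a Nash equilibrium `z*`, the worst-case cost `max_i χ_i(z*)` and total cost
`∑_i χ_i(z*)` are bounded by `max_i SR_i(z*)` and `∑_i SR_i(z*)` times the optimal
egalitarian and utilitarian costs respectively, where `SR_i(z*) = χ_i(z*)/χ_i(m_i·1)`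
and `χ_i(m_i·1) > 0`. -/
theorem price_of_anarchy_bounds
    (n : ℕ) (hn : 0 < n) (p w r : Fin n → ℝ) (a : Fin n → Fin n → ℝ)
    (hw : ∀ i, 0 < w i) (hr : ∀ i, 0 < r i)
    (B : ℝ) (hB : B = ∑ k, r k)
    (hpos : ∀ i k, 0 ≤ a i k)
    (hp : ∀ i, p i ≠ 0)
    (U : Fin n → (Fin n → ℝ) → ℝ)
    (hU : ∀ i z, U i z =
      -(w i * r i / (2 * B)) * (z i - p i) ^ 2
        - (1 / 2) * (∑ k, (a i k * r k / B) * (z k - z i) ^ 2)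
        - (z i) ^ 4 / (4 * r i))
    (χ : Fin n → (Fin n → ℝ) → ℝ) (hχ : ∀ i z, χ i z = -U i z)
    (m : Fin n → ℝ)
    (hm : ∀ i, -(w i * r i / B) * (m i - p i) - (m i) ^ 3 / r i = 0)
    (zstar : Fin n → ℝ)
    (hnash : ∀ i, ∀ x : ℝ, U i (Function.update zstar i x) ≤ U i zstar) :
    (∀ i, 0 < χ i (fun _ => m i)) ∧
    ∀ y : Fin n → ℝ,
      (⨆ i, χ i zstar) ≤ (⨆ i, χ i zstar / χ i (fun _ => m i)) * (⨆ i, χ i y) ∧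
      (∑ i, χ i zstar) ≤ (∑ i, χ i zstar / χ i (fun _ => m i)) * (∑ i, χ i y) :=
  price_of_anarchy_bounds_general n p w r a hw hr B hB hpos hp U hU χ hχ m hm zstar
end

section
/- (Consensus equilibrium is socially optimal) Suppose a_{ik} ≥ 0 for all i,k (no antagonistic relations) and m_i = m for every i, for some m ∈ ℝ (so that m·1 is the consensus equilibrium). Then the consensus profile m·1 minimizes both the egalitarian cost and the utilitarian cost over ℝⁿ: for every z ∈ ℝⁿ, max_i χ_i(m·1) ≤ max_i χ_i(z) and ∑_i χ_i(m·1) ≤ ∑_i χ_i(z). Consequently the egalitarian and utilitarian prices of anarchy equal 1. -/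
/-!
Each cost splits as `χ i z = c_i (z_i - p_i)² + ½ ∑_k b_{ik} (z_k - z_i)² + z_i⁴ / (4 r_i)` with
`c_i, b_{ik} ≥ 0`. The disagreement term is nonnegative and vanishes at consensus, and the
remaining one-variable function is convex with critical point exactly the root `m` of the self
function, so `m·1` minimizes every `χ i` simultaneously; the max and the sum follow.
-/

open Finset

lemma pow_four_add_tangent_le (m x : ℝ) : m ^ 4 + 4 * m ^ 3 * (x - m) ≤ x ^ 4 := by
  have hfactor : x ^ 4 - (m ^ 4 + 4 * m ^ 3 * (x - m)) =
      (x - m) ^ 2 * ((x + m) ^ 2 + 2 * m ^ 2) := by ring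
  rw [← sub_nonneg, hfactor]
  positivity

lemma quadratic_add_quartic_le_of_critical {c r m p : ℝ} (hc : 0 ≤ c) (hr : 0 < r)
    (hcrit : 2 * c * (m - p) + m ^ 3 / r = 0) (x : ℝ) :
    c * (m - p) ^ 2 + m ^ 4 / (4 * r) ≤ c * (x - p) ^ 2 + x ^ 4 / (4 * r) := by
  have hslope : 2 * c * (m - p) * r = -m ^ 3 := by
    field_simp at hcrit; linarith
  have hsplit : c * (x - p) ^ 2 + x ^ 4 / (4 * r) =
      c * (m - p) ^ 2 + m ^ 4 / (4 * r) + c * (x - m) ^ 2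
        + (x ^ 4 - (m ^ 4 + 4 * m ^ 3 * (x - m))) / (4 * r) := by
    field_simp; linear_combination 4 * (x - m) * hslope
  rw [hsplit]
  have htangent := sub_nonneg.2 (pow_four_add_tangent_le m x)
  have hquad := mul_nonneg hc (sq_nonneg (x - m))
  have hquartic := div_nonneg htangent (by positivity : (0 : ℝ) ≤ 4 * r)
  linarith

theorem consensus_equilibrium_socially_optimal_general
    (n : ℕ) (p w r : Fin n → ℝ) (a : Fin n → Fin n → ℝ)
    (hw : ∀ i, 0 < w i) (hr : ∀ i, 0 < r i)
    (B : ℝ) (hB : B = ∑ k, r k)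
    (hpos : ∀ i k, 0 ≤ a i k)
    (χ : Fin n → (Fin n → ℝ) → ℝ)
    (hχ : ∀ i z, χ i z =
      -(-(w i * r i / (2 * B)) * (z i - p i) ^ 2
        - (1 / 2) * (∑ k, (a i k * r k / B) * (z k - z i) ^ 2)
        - (z i) ^ 4 / (4 * r i)))
    (m : ℝ)
    (hm : ∀ i, -(w i * r i / B) * (m - p i) - m ^ 3 / r i = 0) :
    ∀ z : Fin n → ℝ,
      (⨆ i, χ i (fun _ => m)) ≤ (⨆ i, χ i z) ∧
      (∑ i, χ i (fun _ => m)) ≤ (∑ i, χ i z) := by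
  intro z
  have hB0 : 0 ≤ B := hB ▸ sum_nonneg fun k _ => (hr k).le
  have hagent : ∀ i, χ i (fun _ => m) ≤ χ i z := by
    intro i
    have hcrit : 2 * (w i * r i / (2 * B)) * (m - p i) + m ^ 3 / r i = 0 := by
      rw [mul_div_assoc', mul_div_mul_left _ _ two_ne_zero]; linarith [hm i]
    have hmin := quadratic_add_quartic_le_of_critical
      (div_nonneg (mul_nonneg (hw i).le (hr i).le) (by positivity)) (hr i) hcrit (z i)
    have hdisagree : 0 ≤ ∑ k, a i k * r k / B * (z k - z i) ^ 2 := sum_nonneg fun k _ =>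
      mul_nonneg (div_nonneg (mul_nonneg (hpos i k) (hr k).le) hB0) (sq_nonneg _)
    rw [hχ, hχ]
    simp only [sub_self, zero_pow two_ne_zero, mul_zero, sum_const_zero]
    linarith
  exact ⟨ciSup_mono (Set.finite_range _).bddAbove hagent, sum_le_sum fun i _ => hagent i⟩

/-- A consensus equilibrium is socially optimal: without antagonistic relations, if
all the roots `m_i` coincide at `m`, the consensus profile `m·1` minimizes both the
egalitarian cost `max_i χ_i` and the utilitarian cost `∑_i χ_i` over `ℝⁿ` (hence the
egalitarian and utilitarian prices of anarchy equal 1). -/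
theorem consensus_equilibrium_socially_optimal
    (n : ℕ) (hn : 0 < n) (p w r : Fin n → ℝ) (a : Fin n → Fin n → ℝ)
    (hw : ∀ i, 0 < w i) (hr : ∀ i, 0 < r i)
    (B : ℝ) (hB : B = ∑ k, r k)
    (hpos : ∀ i k, 0 ≤ a i k)
    (χ : Fin n → (Fin n → ℝ) → ℝ)
    (hχ : ∀ i z, χ i z =
      -(-(w i * r i / (2 * B)) * (z i - p i) ^ 2
        - (1 / 2) * (∑ k, (a i k * r k / B) * (z k - z i) ^ 2)
        - (z i) ^ 4 / (4 * r i)))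
    (m : ℝ)
    (hm : ∀ i, -(w i * r i / B) * (m - p i) - m ^ 3 / r i = 0) :
    ∀ z : Fin n → ℝ,
      (⨆ i, χ i (fun _ => m)) ≤ (⨆ i, χ i z) ∧
      (∑ i, χ i (fun _ => m)) ≤ (∑ i, χ i z) :=
  consensus_equilibrium_socially_optimal_general n p w r a hw hr B hB hpos χ hχ m hm
end

section
/- (Equal period of oscillations in the two-agent dynamics) Let (z_1, z_2) : ℝ → ℝ² be a solution of the two-agent opinion dynamics. Suppose z_1 is periodic with fundamental period T_1 > 0 (T_1 is a period of z_1 and no T ∈ (0, T_1) is a period) and z_2 is periodic with fundamental period T_2 > 0. Then T_1 = T_2. -/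
/-!
A period of `z₁` is a period of `z₁'`, so the equation for `z₁` shows that it is a period
of `c₁ r₂ / B · z₂`, hence of `z₂` unless `c₁ r₂ / B = 0`. In that degenerate case `z₁` solves
the autonomous equation `z₁' = S₁(z₁)`; a primitive `F` of `S₁` is nondecreasing along it,
since `(F ∘ z₁)' = S₁(z₁)² ≥ 0`, so periodicity forces `S₁(z₁) = 0` and `z₁` is constant,
which has no fundamental period. By symmetry each fundamental period is a period of the other
component, so neither can be smaller than the other.
-/

open Set

def IsForwardPeriod {α : Type*} (z : ℝ → α) (T : ℝ) : Prop :=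
  ∀ t : ℝ, 0 ≤ t → z (t + T) = z t

namespace IsForwardPeriod

variable {α β : Type*} {z : ℝ → α} {T : ℝ}

lemma comp (hper : IsForwardPeriod z T) (g : α → β) : IsForwardPeriod (g ∘ z) T :=
  fun t ht => congrArg g (hper t ht)

lemma add_nat_mul (hper : IsForwardPeriod z T) (hT : 0 ≤ T) (n : ℕ) {t : ℝ} (ht : 0 ≤ t) :
    z (t + n * T) = z t := by
  induction n with
  | zero => simp
  | succ n ih => rw [Nat.cast_succ, add_one_mul, ← add_assoc, hper _ (by positivity), ih]

lemma of_eqOn_Ici (h : EqOn z (fun _ => z 0) (Ici 0)) (hT : 0 ≤ T) : IsForwardPeriod z T :=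
  fun t ht => by rw [h (mem_Ici.2 (add_nonneg ht hT)), h (mem_Ici.2 ht)]

lemma eqOn_Ici_of_monotoneOn [PartialOrder α] (hper : IsForwardPeriod z T) (hT : 0 < T)
    (hmono : MonotoneOn z (Ici 0)) : EqOn z (fun _ => z 0) (Ici 0) := by
  intro t ht
  obtain ⟨n, hn⟩ := exists_nat_ge (t / T)
  have hnT : (0 : ℝ) ≤ 0 + n * T := by positivity
  refine le_antisymm ?_ (hmono self_mem_Ici ht ht)
  calc z t ≤ z (0 + n * T) := hmono ht hnT (by rw [zero_add]; exact (div_le_iff₀ hT).1 hn)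
    _ = z 0 := hper.add_nat_mul hT.le n le_rfl

end IsForwardPeriod

lemma HasDerivAt.unique_of_eqOn_Ici {E : Type*} [NormedAddCommGroup E] [NormedSpace ℝ E]
    {f g : ℝ → E} {a b : E} {x : ℝ} (hf : HasDerivAt f a x) (hg : HasDerivAt g b x)
    (h : EqOn f g (Ici x)) : a = b :=
  (uniqueDiffWithinAt_Ici x).eq_deriv _
    (hf.hasDerivWithinAt.congr_of_mem (fun _ hy => (h hy).symm) self_mem_Ici) hg.hasDerivWithinAt

lemma eqOn_Ici_of_autonomous_of_isForwardPeriod {f z : ℝ → ℝ} {T : ℝ} (hf : Continuous f)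
    (hsol : ∀ t, 0 ≤ t → HasDerivAt z (f (z t)) t) (hper : IsForwardPeriod z T) (hT : 0 < T) :
    EqOn z (fun _ => z 0) (Ici 0) := by
  set F : ℝ → ℝ := fun x => ∫ y in (0 : ℝ)..x, f y
  have hF : ∀ x, HasDerivAt F (f x) x := fun x => (hf.integral_hasStrictDerivAt 0 x).hasDerivAt
  have hG : ∀ t, 0 ≤ t → HasDerivAt (F ∘ z) (f (z t) * f (z t)) t :=
    fun t ht => (hF (z t)).comp t (hsol t ht)
  have hGmono : MonotoneOn (F ∘ z) (Ici 0) := by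
    refine monotoneOn_of_hasDerivWithinAt_nonneg (f' := fun t => f (z t) * f (z t))
      (convex_Ici 0)
      (fun t ht => (hG t ht).continuousAt.continuousWithinAt) (fun t ht => ?_)
      (fun t _ => mul_self_nonneg _)
    rw [interior_Ici] at ht ⊢
    exact (hG t (le_of_lt ht)).hasDerivWithinAt
  have hGconst := (hper.comp F).eqOn_Ici_of_monotoneOn hT hGmono
  have hfz : ∀ t, 0 ≤ t → f (z t) = 0 := fun t ht =>
    mul_self_eq_zero.1 <| (hG t ht).unique_of_eqOn_Ici (hasDerivAt_const t _)
      fun s hs => hGconst (le_trans ht hs)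
  intro t ht
  refine constant_of_has_deriv_right_zero
    (fun s hs => (hsol s hs.1).continuousAt.continuousWithinAt) (fun s hs => ?_) t ⟨ht, le_rfl⟩
  rw [← hfz s hs.1]
  exact (hsol s hs.1).hasDerivWithinAt

lemma isForwardPeriod_of_coupled_of_ne_zero {g z₁ z₂ : ℝ → ℝ} {K T : ℝ} (hK : K ≠ 0)
    (hsol : ∀ t, 0 ≤ t → HasDerivAt z₁ (g (z₁ t) + K * (z₂ t - z₁ t)) t)
    (hper : IsForwardPeriod z₁ T) (hT : 0 ≤ T) : IsForwardPeriod z₂ T := by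
  intro t ht
  have hderiv :
      g (z₁ (t + T)) + K * (z₂ (t + T) - z₁ (t + T)) = g (z₁ t) + K * (z₂ t - z₁ t) :=
    ((hsol (t + T) (add_nonneg ht hT)).comp_add_const t T).unique_of_eqOn_Ici (hsol t ht)
      fun s hs => hper s (ht.trans hs)
  rw [hper t ht] at hderiv
  simpa [hK] using hderiv

lemma isForwardPeriod_of_coupled {g z₁ z₂ : ℝ → ℝ} {K T : ℝ} (hg : Continuous g)
    (hsol : ∀ t, 0 ≤ t → HasDerivAt z₁ (g (z₁ t) + K * (z₂ t - z₁ t)) t)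
    (hper : IsForwardPeriod z₁ T) (hT : 0 < T)
    (hfund : ∀ S, 0 < S → S < T → ¬ IsForwardPeriod z₁ S) : IsForwardPeriod z₂ T := by
  rcases eq_or_ne K 0 with rfl | hK
  · refine absurd ?_ (hfund (T / 2) (half_pos hT) (half_lt_self hT))
    have hconst := eqOn_Ici_of_autonomous_of_isForwardPeriod hg
      (fun t ht => by simpa using hsol t ht) hper hT
    exact IsForwardPeriod.of_eqOn_Ici hconst (half_pos hT).le
  · exact isForwardPeriod_of_coupled_of_ne_zero hK hsol hper hT.le

theorem two_agent_equal_fundamental_periods_general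
    (w₁ w₂ r₁ r₂ : ℝ)
    (c₁ c₂ p₁ p₂ : ℝ) (B : ℝ)
    (z₁ z₂ : ℝ → ℝ)
    (hsol₁ : ∀ t : ℝ, 0 ≤ t → HasDerivAt z₁
      ((-(w₁ * r₁ / B) * (z₁ t - p₁) - (z₁ t) ^ 3 / r₁)
        + (c₁ * r₂ / B) * (z₂ t - z₁ t)) t)
    (hsol₂ : ∀ t : ℝ, 0 ≤ t → HasDerivAt z₂
      ((-(w₂ * r₂ / B) * (z₂ t - p₂) - (z₂ t) ^ 3 / r₂)
        - (c₂ * r₁ / B) * (z₂ t - z₁ t)) t)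
    (T₁ T₂ : ℝ) (hT₁ : 0 < T₁) (hT₂ : 0 < T₂)
    (hper₁ : ∀ t : ℝ, 0 ≤ t → z₁ (t + T₁) = z₁ t)
    (hfund₁ : ∀ T : ℝ, 0 < T → T < T₁ → ¬ (∀ t : ℝ, 0 ≤ t → z₁ (t + T) = z₁ t))
    (hper₂ : ∀ t : ℝ, 0 ≤ t → z₂ (t + T₂) = z₂ t)
    (hfund₂ : ∀ T : ℝ, 0 < T → T < T₂ → ¬ (∀ t : ℝ, 0 ≤ t → z₂ (t + T) = z₂ t)) :
    T₁ = T₂ := by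
  have h₂ : IsForwardPeriod z₂ T₁ :=
    isForwardPeriod_of_coupled (g := fun x => -(w₁ * r₁ / B) * (x - p₁) - x ^ 3 / r₁)
      (by fun_prop) hsol₁ hper₁ hT₁ hfund₁
  have h₁ : IsForwardPeriod z₁ T₂ :=
    isForwardPeriod_of_coupled (g := fun x => -(w₂ * r₂ / B) * (x - p₂) - x ^ 3 / r₂)
      (K := c₂ * r₁ / B) (by fun_prop)
      (fun t ht => by convert hsol₂ t ht using 1; ring) hper₂ hT₂ hfund₂
  exact le_antisymm (not_lt.1 fun h => hfund₁ T₂ hT₂ h h₁)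
    (not_lt.1 fun h => hfund₂ T₁ hT₁ h h₂)

/-- Equal period of oscillations in the two-agent opinion dynamics: if both opinion
components are periodic with fundamental periods `T₁` and `T₂`, then `T₁ = T₂`. -/
theorem two_agent_equal_fundamental_periods
    (w₁ w₂ r₁ r₂ : ℝ) (hw₁ : 0 < w₁) (hw₂ : 0 < w₂) (hr₁ : 0 < r₁) (hr₂ : 0 < r₂)
    (c₁ c₂ p₁ p₂ : ℝ) (B : ℝ) (hB : B = r₁ + r₂)
    (z₁ z₂ : ℝ → ℝ)
    (hd₁ : Differentiable ℝ z₁) (hd₂ : Differentiable ℝ z₂)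
    (hsol₁ : ∀ t : ℝ, 0 ≤ t → HasDerivAt z₁
      ((-(w₁ * r₁ / B) * (z₁ t - p₁) - (z₁ t) ^ 3 / r₁)
        + (c₁ * r₂ / B) * (z₂ t - z₁ t)) t)
    (hsol₂ : ∀ t : ℝ, 0 ≤ t → HasDerivAt z₂
      ((-(w₂ * r₂ / B) * (z₂ t - p₂) - (z₂ t) ^ 3 / r₂)
        - (c₂ * r₁ / B) * (z₂ t - z₁ t)) t)
    (T₁ T₂ : ℝ) (hT₁ : 0 < T₁) (hT₂ : 0 < T₂)
    (hper₁ : ∀ t : ℝ, 0 ≤ t → z₁ (t + T₁) = z₁ t)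
    (hfund₁ : ∀ T : ℝ, 0 < T → T < T₁ → ¬ (∀ t : ℝ, 0 ≤ t → z₁ (t + T) = z₁ t))
    (hper₂ : ∀ t : ℝ, 0 ≤ t → z₂ (t + T₂) = z₂ t)
    (hfund₂ : ∀ T : ℝ, 0 < T → T < T₂ → ¬ (∀ t : ℝ, 0 ≤ t → z₂ (t + T) = z₂ t)) :
    T₁ = T₂ :=
  two_agent_equal_fundamental_periods_general w₁ w₂ r₁ r₂ c₁ c₂ p₁ p₂ B z₁ z₂ hsol₁ hsol₂ T₁ T₂ hT₁
    hT₂ hper₁ hfund₁ hper₂ hfund₂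
end

section
/- (Necessary conditions for existence of periodic solutions of the two-agent dynamics) Let (z_1, z_2) : ℝ → ℝ² be a solution of the two-agent opinion dynamics that is periodic with some period T > 0 and is not constant. Then all of the following hold: (i) c_1 < 0 or c_2 < 0; (ii) c_1·c_2 ≠ 0; and (iii) c_2 r_1 + w_1 r_1 + w_2 r_2 + c_1 r_2 < 0. -/
/-!
Put `k₁ = c₁r₂/B`, `k₂ = c₂r₁/B`; then the system reads `zᵢ' = vᵢ` with
`v₁ = φ₁(z₁) + k₁z₂`, `v₂ = φ₂(z₂) + k₂z₁` and `φᵢ(x) = qᵢ - aᵢx - x³/rᵢ`, `aᵢ = wᵢrᵢ/B + kᵢ`.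
Integrating exact derivatives over a period gives, with `A = ∫ z₂v₁` and `C = ∫ v₁v₂`,
`∫ v₁² = k₁A` and `∫ v₂² = -k₂A` (from `(Φᵢ ∘ zᵢ)'` with `Φᵢ' = φᵢ`, and from `(z₁z₂)'`), and
`∫ φᵢ'(zᵢ)vᵢ² = -kᵢC` (from `(vᵢ²/2)'`). If `z₁` were constant on a period, `A = -∫ z₁v₂ = 0`
would make `z₂` constant as well; so on a non-constant orbit both `∫ vᵢ²` are positive and
`k₁k₂ < 0`. Eliminating `A` and `C` gives `∫ v₂² ∫ φ₁'(z₁)v₁² + ∫ v₁² ∫ φ₂'(z₂)v₂² = 0`, a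
Dulac-type identity; as `φᵢ'(x) = -aᵢ - 3x²/rᵢ`, it forces `a₁ + a₂ ≤ 0`, and equality would
make `z₁z₁' ≡ 0`, i.e. `z₁` constant.
-/

open Set intervalIntegral
open MeasureTheory (volume)

section Calculus

variable {T : ℝ}

lemma integral_eq_zero_of_hasDerivAt_of_eq {F f : ℝ → ℝ} (hT : 0 ≤ T)
    (hF : ∀ t ∈ Icc 0 T, HasDerivAt F (f t) t) (hf : ContinuousOn f (Icc 0 T))
    (hFT : F T = F 0) : ∫ t in 0..T, f t = 0 := by
  rw [integral_eq_sub_of_hasDerivAt (by rwa [uIcc_of_le hT]) (hf.intervalIntegrable_of_Icc hT),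
    hFT, sub_self]

lemma eqOn_zero_of_integral_sq_eq_zero {f : ℝ → ℝ} (hT : 0 < T) (hf : ContinuousOn f (Icc 0 T))
    (h : ∫ t in 0..T, f t ^ 2 = 0) : EqOn f 0 (Icc 0 T) := by
  intro t ht
  by_contra hne
  exact (integral_pos hT (hf.pow 2) (fun s _ => sq_nonneg (f s)) ⟨t, ht, sq_pos_iff.2 hne⟩).ne' h

lemma constant_of_hasDerivAt_of_eqOn_zero {z v : ℝ → ℝ}
    (hz : ∀ t ∈ Icc 0 T, HasDerivAt z (v t) t) (hv : EqOn v 0 (Icc 0 T)) :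
    ∀ t ∈ Icc 0 T, z t = z 0 :=
  constant_of_has_deriv_right_zero (HasDerivAt.continuousOn hz) fun t ht => by
    simpa [hv (Ico_subset_Icc_self ht)] using (hz t (Ico_subset_Icc_self ht)).hasDerivWithinAt

lemma constant_of_hasDerivAt_of_mul_eq_zero {z v : ℝ → ℝ}
    (hz : ∀ t ∈ Icc 0 T, HasDerivAt z (v t) t) (hzv : ∀ t ∈ Icc 0 T, z t * v t = 0) :
    ∀ t ∈ Icc 0 T, z t = z 0 := by
  have hsq : ∀ t ∈ Icc 0 T, z t ^ 2 = z 0 ^ 2 :=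
    constant_of_hasDerivAt_of_eqOn_zero (v := fun t => 2 * (z t * v t))
      (fun t ht => ((hz t ht).pow 2).congr_deriv (by ring))
      (fun t ht => by simp [hzv t ht])
  intro t ht
  by_cases h0 : z 0 = 0
  · simpa [h0] using hsq t ht
  · exact isPreconnected_Icc.eq_of_sq_eq (g := fun _ => z 0) (HasDerivAt.continuousOn hz)
      continuousOn_const (fun s hs => hsq s hs) (fun _ => h0) (left_mem_Icc.2 (ht.1.trans ht.2))
      rfl ht

lemma exists_mem_Icc_eq_of_add_eq {α : Type*} {u : ℝ → α} (hT : 0 < T)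
    (hu : ∀ t, 0 ≤ t → u (t + T) = u t) {t : ℝ} (ht : 0 ≤ t) : ∃ s ∈ Icc 0 T, u t = u s := by
  have hshift : ∀ n : ℕ, ∀ s, 0 ≤ s → u (s + n * T) = u s := by
    intro n
    induction n with
    | zero => simp
    | succ n ih =>
      intro s hs
      rw [Nat.cast_succ, add_one_mul, ← add_assoc, hu _ (add_nonneg hs (by positivity)), ih s hs]
  set n := ⌊t / T⌋₊
  have hn : n * T ≤ t := (le_div_iff₀ hT).1 (Nat.floor_le (div_nonneg ht hT.le))
  have hn' : t < (n + 1) * T := (div_lt_iff₀ hT).1 (Nat.lt_floor_add_one _)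
  refine ⟨t - n * T, ⟨by linarith, by linarith⟩, ?_⟩
  rw [← hshift n (t - n * T) (by linarith), sub_add_cancel]

lemma exists_mem_Icc_ne_of_add_eq {α : Type*} {u : ℝ → α} (hT : 0 < T)
    (hu : ∀ t, 0 ≤ t → u (t + T) = u t) (hne : ∃ t₁ t₂, 0 ≤ t₁ ∧ 0 ≤ t₂ ∧ u t₁ ≠ u t₂) :
    ∃ t ∈ Icc 0 T, u t ≠ u 0 := by
  obtain ⟨t₁, t₂, ht₁, ht₂, hne⟩ := hne
  obtain ⟨s₁, hs₁, hu₁⟩ := exists_mem_Icc_eq_of_add_eq hT hu ht₁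
  obtain ⟨s₂, hs₂, hu₂⟩ := exists_mem_Icc_eq_of_add_eq hT hu ht₂
  by_contra! hconst
  exact hne (by rw [hu₁, hu₂, hconst s₁ hs₁, hconst s₂ hs₂])

end Calculus

section ForcedScalarEquation

variable {φ φ' z u u' v : ℝ → ℝ} {k T : ℝ}

lemma integral_sq_eq_mul_integral_mul (hT : 0 ≤ T) (hz : ∀ t ∈ Icc 0 T, HasDerivAt z (v t) t)
    (hv : EqOn v (fun t => φ (z t) + k * u t) (Icc 0 T)) (hφ : Continuous φ)
    (hu : ContinuousOn u (Icc 0 T)) (hzT : z T = z 0) :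
    ∫ t in 0..T, v t ^ 2 = k * ∫ t in 0..T, u t * v t := by
  have hzc := HasDerivAt.continuousOn hz
  have hvc : ContinuousOn v (Icc 0 T) := ((hφ.comp_continuousOn hzc).add (hu.const_mul k)).congr hv
  -- `∫ φ(z) ż` is the change in a primitive of `φ` along the closed orbit
  have hpot : ∫ t in 0..T, φ (z t) * v t = 0 := by
    rw [← uIcc_of_le hT] at hz hvc
    rw [show (fun t => φ (z t) * v t) = fun t => (φ ∘ z) t * v t from rfl,
      integral_comp_mul_deriv' hz hvc hφ.continuousOn, hzT, integral_same]
  calc ∫ t in 0..T, v t ^ 2 = ∫ t in 0..T, (φ (z t) * v t + k * (u t * v t)) := by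
        refine integral_congr fun t ht => ?_
        rw [uIcc_of_le hT] at ht
        have h := hv ht
        dsimp only at h ⊢
        linear_combination v t * h
    _ = k * ∫ t in 0..T, u t * v t := by
        have hφv : IntervalIntegrable (fun t => φ (z t) * v t) volume 0 T :=
          ((hφ.comp_continuousOn hzc).mul hvc).intervalIntegrable_of_Icc hT
        have huv : IntervalIntegrable (fun t => k * (u t * v t)) volume 0 T :=
          ((hu.mul hvc).const_mul k).intervalIntegrable_of_Icc hT
        rw [integral_add hφv huv, integral_const_mul, hpot, zero_add]

lemma integral_deriv_mul_sq_add_mul_integral_mul_eq_zero (hT : 0 ≤ T)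
    (hz : ∀ t ∈ Icc 0 T, HasDerivAt z (v t) t)
    (hv : EqOn v (fun t => φ (z t) + k * u t) (Icc 0 T))
    (hφ : ∀ x, HasDerivAt φ (φ' x) x) (hφ' : Continuous φ')
    (hu : ∀ t ∈ Icc 0 T, HasDerivAt u (u' t) t) (hu' : ContinuousOn u' (Icc 0 T))
    (hzT : z T = z 0) (huT : u T = u 0) :
    (∫ t in 0..T, φ' (z t) * v t ^ 2) + k * ∫ t in 0..T, v t * u' t = 0 := by
  have hzc := HasDerivAt.continuousOn hz
  have hφc : Continuous φ := continuous_iff_continuousAt.2 fun x => (hφ x).continuousAt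
  have hvc : ContinuousOn v (Icc 0 T) :=
    ((hφc.comp_continuousOn hzc).add ((HasDerivAt.continuousOn hu).const_mul k)).congr hv
  -- `v` is only known on `[0, T]`, so differentiate `(φ ∘ z + k u)² / 2` instead of `v² / 2`
  have h : ∫ t in 0..T, (φ' (z t) * v t ^ 2 + k * (v t * u' t)) = 0 := by
    refine integral_eq_zero_of_hasDerivAt_of_eq hT (F := fun t => (φ (z t) + k * u t) ^ 2 / 2)
      (fun t ht => ?_) (by fun_prop) (by rw [hzT, huT])
    have hd := ((((hφ (z t)).comp t (hz t ht)).add ((hu t ht).const_mul k)).pow 2).div_const 2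
    refine hd.congr_deriv ?_
    have hvt : v t = φ (z t) + k * u t := hv ht
    simp only [Pi.add_apply, Function.comp_apply, hvt]
    ring
  have hi₁ : IntervalIntegrable (fun t => φ' (z t) * v t ^ 2) volume 0 T :=
    ((hφ'.comp_continuousOn hzc).mul (hvc.pow 2)).intervalIntegrable_of_Icc hT
  have hi₂ : IntervalIntegrable (fun t => k * (v t * u' t)) volume 0 T :=
    ((hvc.mul hu').const_mul k).intervalIntegrable_of_Icc hT
  rwa [integral_add hi₁ hi₂, integral_const_mul] at h

lemma integral_cubic_deriv_mul_sq (a b : ℝ) (hT : 0 ≤ T) (hz : ContinuousOn z (Icc 0 T))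
    (hv : ContinuousOn v (Icc 0 T)) :
    ∫ t in 0..T, (-a - 3 * b * z t ^ 2) * v t ^ 2 =
      -a * (∫ t in 0..T, v t ^ 2) - 3 * b * ∫ t in 0..T, (z t * v t) ^ 2 := by
  have hi₁ : IntervalIntegrable (fun t => -a * v t ^ 2) volume 0 T :=
    ((hv.pow 2).const_mul _).intervalIntegrable_of_Icc hT
  have hi₂ : IntervalIntegrable (fun t => 3 * b * (z t * v t) ^ 2) volume 0 T :=
    (((hz.mul hv).pow 2).const_mul _).intervalIntegrable_of_Icc hT
  rw [← integral_const_mul, ← integral_const_mul, ← integral_sub hi₁ hi₂]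
  exact integral_congr fun t _ => by ring

end ForcedScalarEquation

structure IsCoupledPeriodicSolution (φ₁ φ₂ : ℝ → ℝ) (k₁ k₂ T : ℝ) (z₁ z₂ v₁ v₂ : ℝ → ℝ) :
    Prop where
  hasDerivAt₁ : ∀ t ∈ Icc 0 T, HasDerivAt z₁ (v₁ t) t
  hasDerivAt₂ : ∀ t ∈ Icc 0 T, HasDerivAt z₂ (v₂ t) t
  eqOn₁ : EqOn v₁ (fun t => φ₁ (z₁ t) + k₁ * z₂ t) (Icc 0 T)
  eqOn₂ : EqOn v₂ (fun t => φ₂ (z₂ t) + k₂ * z₁ t) (Icc 0 T)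
  periodic₁ : z₁ T = z₁ 0
  periodic₂ : z₂ T = z₂ 0

namespace IsCoupledPeriodicSolution

variable {φ₁ φ₂ φ₁' φ₂' z₁ z₂ v₁ v₂ : ℝ → ℝ} {k₁ k₂ T : ℝ}

lemma swap (h : IsCoupledPeriodicSolution φ₁ φ₂ k₁ k₂ T z₁ z₂ v₁ v₂) :
    IsCoupledPeriodicSolution φ₂ φ₁ k₂ k₁ T z₂ z₁ v₂ v₁ :=
  ⟨h.hasDerivAt₂, h.hasDerivAt₁, h.eqOn₂, h.eqOn₁, h.periodic₂, h.periodic₁⟩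

lemma continuousOn_v₁ (h : IsCoupledPeriodicSolution φ₁ φ₂ k₁ k₂ T z₁ z₂ v₁ v₂)
    (hφ₁ : Continuous φ₁) : ContinuousOn v₁ (Icc 0 T) :=
  ((hφ₁.comp_continuousOn (HasDerivAt.continuousOn h.hasDerivAt₁)).add
    ((HasDerivAt.continuousOn h.hasDerivAt₂).const_mul k₁)).congr h.eqOn₁

lemma integral_sq_v₁ (h : IsCoupledPeriodicSolution φ₁ φ₂ k₁ k₂ T z₁ z₂ v₁ v₂) (hT : 0 ≤ T)
    (hφ₁ : Continuous φ₁) : ∫ t in 0..T, v₁ t ^ 2 = k₁ * ∫ t in 0..T, z₂ t * v₁ t :=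
  integral_sq_eq_mul_integral_mul hT h.hasDerivAt₁ h.eqOn₁ hφ₁
    (HasDerivAt.continuousOn h.hasDerivAt₂) h.periodic₁

lemma integral_z₂_mul_v₁_add (h : IsCoupledPeriodicSolution φ₁ φ₂ k₁ k₂ T z₁ z₂ v₁ v₂)
    (hT : 0 ≤ T) (hφ₁ : Continuous φ₁) (hφ₂ : Continuous φ₂) :
    (∫ t in 0..T, z₂ t * v₁ t) + ∫ t in 0..T, z₁ t * v₂ t = 0 := by
  have hz₁ := HasDerivAt.continuousOn h.hasDerivAt₁
  have hz₂ := HasDerivAt.continuousOn h.hasDerivAt₂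
  have hv₁ := h.continuousOn_v₁ hφ₁
  have hv₂ := h.swap.continuousOn_v₁ hφ₂
  have hi₁ : IntervalIntegrable (fun t => z₂ t * v₁ t) volume 0 T :=
    (hz₂.mul hv₁).intervalIntegrable_of_Icc hT
  have hi₂ : IntervalIntegrable (fun t => z₁ t * v₂ t) volume 0 T :=
    (hz₁.mul hv₂).intervalIntegrable_of_Icc hT
  rw [← integral_add hi₁ hi₂]
  exact integral_eq_zero_of_hasDerivAt_of_eq hT (F := fun t => z₁ t * z₂ t)
    (fun t ht => ((h.hasDerivAt₁ t ht).mul (h.hasDerivAt₂ t ht)).congr_deriv (by ring))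
    ((hz₂.mul hv₁).add (hz₁.mul hv₂)) (by rw [h.periodic₁, h.periodic₂])

lemma integral_sq_v₂ (h : IsCoupledPeriodicSolution φ₁ φ₂ k₁ k₂ T z₁ z₂ v₁ v₂) (hT : 0 ≤ T)
    (hφ₁ : Continuous φ₁) (hφ₂ : Continuous φ₂) :
    ∫ t in 0..T, v₂ t ^ 2 = -k₂ * ∫ t in 0..T, z₂ t * v₁ t := by
  rw [h.swap.integral_sq_v₁ hT hφ₂,
    eq_neg_of_add_eq_zero_right (h.integral_z₂_mul_v₁_add hT hφ₁ hφ₂), mul_neg, neg_mul]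

lemma integral_deriv_mul_sq_v₁ (h : IsCoupledPeriodicSolution φ₁ φ₂ k₁ k₂ T z₁ z₂ v₁ v₂)
    (hT : 0 ≤ T) (hφ₁ : ∀ x, HasDerivAt φ₁ (φ₁' x) x) (hφ₁' : Continuous φ₁')
    (hφ₂ : Continuous φ₂) :
    ∫ t in 0..T, φ₁' (z₁ t) * v₁ t ^ 2 = -k₁ * ∫ t in 0..T, v₁ t * v₂ t := by
  linear_combination integral_deriv_mul_sq_add_mul_integral_mul_eq_zero hT h.hasDerivAt₁
    h.eqOn₁ hφ₁ hφ₁' h.hasDerivAt₂ (h.swap.continuousOn_v₁ hφ₂) h.periodic₁ h.periodic₂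

theorem integral_sq_v₂_mul_add_integral_sq_v₁_mul_eq_zero
    (h : IsCoupledPeriodicSolution φ₁ φ₂ k₁ k₂ T z₁ z₂ v₁ v₂) (hT : 0 ≤ T)
    (hφ₁ : ∀ x, HasDerivAt φ₁ (φ₁' x) x) (hφ₁' : Continuous φ₁')
    (hφ₂ : ∀ x, HasDerivAt φ₂ (φ₂' x) x) (hφ₂' : Continuous φ₂') :
    (∫ t in 0..T, v₂ t ^ 2) * (∫ t in 0..T, φ₁' (z₁ t) * v₁ t ^ 2) +
      (∫ t in 0..T, v₁ t ^ 2) * (∫ t in 0..T, φ₂' (z₂ t) * v₂ t ^ 2) = 0 := by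
  have hc₁ : Continuous φ₁ := continuous_iff_continuousAt.2 fun x => (hφ₁ x).continuousAt
  have hc₂ : Continuous φ₂ := continuous_iff_continuousAt.2 fun x => (hφ₂ x).continuousAt
  have hv : ∫ t in 0..T, v₂ t * v₁ t = ∫ t in 0..T, v₁ t * v₂ t :=
    integral_congr fun t _ => mul_comm _ _
  rw [h.integral_sq_v₂ hT hc₁ hc₂, h.integral_deriv_mul_sq_v₁ hT hφ₁ hφ₁' hc₂,
    h.integral_sq_v₁ hT hc₁, h.swap.integral_deriv_mul_sq_v₁ hT hφ₂ hφ₂' hc₁, hv]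
  ring

lemma constant₂_of_constant₁ (h : IsCoupledPeriodicSolution φ₁ φ₂ k₁ k₂ T z₁ z₂ v₁ v₂)
    (hT : 0 < T) (hφ₁ : Continuous φ₁) (hφ₂ : Continuous φ₂)
    (hz₁ : ∀ t ∈ Icc 0 T, z₁ t = z₁ 0) : ∀ t ∈ Icc 0 T, z₂ t = z₂ 0 := by
  have hv₂ := h.swap.continuousOn_v₁ hφ₂
  have hz₁v₂ : ∫ t in 0..T, z₁ t * v₂ t = 0 :=
    integral_eq_zero_of_hasDerivAt_of_eq hT.le (F := fun t => z₁ 0 * z₂ t)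
      (fun t ht => ((h.hasDerivAt₂ t ht).const_mul _).congr_deriv (by rw [hz₁ t ht]))
      ((HasDerivAt.continuousOn h.hasDerivAt₁).mul hv₂) (by rw [h.periodic₂])
  have hz₂v₁ : ∫ t in 0..T, z₂ t * v₁ t = 0 := by
    linarith [h.integral_z₂_mul_v₁_add hT.le hφ₁ hφ₂]
  have hI₂ : ∫ t in 0..T, v₂ t ^ 2 = 0 := by
    rw [h.integral_sq_v₂ hT.le hφ₁ hφ₂, hz₂v₁, mul_zero]
  exact constant_of_hasDerivAt_of_eqOn_zero h.hasDerivAt₂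
    (eqOn_zero_of_integral_sq_eq_zero hT hv₂ hI₂)

lemma not_constant₁ (h : IsCoupledPeriodicSolution φ₁ φ₂ k₁ k₂ T z₁ z₂ v₁ v₂) (hT : 0 < T)
    (hφ₁ : Continuous φ₁) (hφ₂ : Continuous φ₂)
    (hnc : ∃ t ∈ Icc 0 T, z₁ t ≠ z₁ 0 ∨ z₂ t ≠ z₂ 0) : ¬ ∀ t ∈ Icc 0 T, z₁ t = z₁ 0 := by
  intro hz₁
  obtain ⟨t, ht, hne⟩ := hnc
  exact hne.elim (· (hz₁ t ht)) (· (h.constant₂_of_constant₁ hT hφ₁ hφ₂ hz₁ t ht))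

lemma integral_sq_v₁_pos (h : IsCoupledPeriodicSolution φ₁ φ₂ k₁ k₂ T z₁ z₂ v₁ v₂) (hT : 0 < T)
    (hφ₁ : Continuous φ₁) (hφ₂ : Continuous φ₂)
    (hnc : ∃ t ∈ Icc 0 T, z₁ t ≠ z₁ 0 ∨ z₂ t ≠ z₂ 0) : 0 < ∫ t in 0..T, v₁ t ^ 2 :=
  (integral_nonneg hT.le fun t _ => sq_nonneg (v₁ t)).lt_of_ne fun h0 =>
    h.not_constant₁ hT hφ₁ hφ₂ hnc <| constant_of_hasDerivAt_of_eqOn_zero h.hasDerivAt₁ <|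
      eqOn_zero_of_integral_sq_eq_zero hT (h.continuousOn_v₁ hφ₁) h0.symm

lemma integral_sq_v₂_pos (h : IsCoupledPeriodicSolution φ₁ φ₂ k₁ k₂ T z₁ z₂ v₁ v₂) (hT : 0 < T)
    (hφ₁ : Continuous φ₁) (hφ₂ : Continuous φ₂)
    (hnc : ∃ t ∈ Icc 0 T, z₁ t ≠ z₁ 0 ∨ z₂ t ≠ z₂ 0) : 0 < ∫ t in 0..T, v₂ t ^ 2 :=
  h.swap.integral_sq_v₁_pos hT hφ₂ hφ₁ (hnc.imp fun _ ⟨ht, hne⟩ => ⟨ht, hne.symm⟩)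

theorem coupling_mul_neg (h : IsCoupledPeriodicSolution φ₁ φ₂ k₁ k₂ T z₁ z₂ v₁ v₂) (hT : 0 < T)
    (hφ₁ : Continuous φ₁) (hφ₂ : Continuous φ₂)
    (hnc : ∃ t ∈ Icc 0 T, z₁ t ≠ z₁ 0 ∨ z₂ t ≠ z₂ 0) : k₁ * k₂ < 0 := by
  have hI₁ := h.integral_sq_v₁_pos hT hφ₁ hφ₂ hnc
  have hI₂ := h.integral_sq_v₂_pos hT hφ₁ hφ₂ hnc
  rw [h.integral_sq_v₁ hT.le hφ₁] at hI₁
  rw [h.integral_sq_v₂ hT.le hφ₁ hφ₂] at hI₂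
  by_contra! hk
  nlinarith [mul_pos hI₁ hI₂, mul_nonneg hk (sq_nonneg (∫ t in 0..T, z₂ t * v₁ t))]

theorem linear_coeff_add_neg {q₁ q₂ a₁ a₂ b₁ b₂ : ℝ}
    (h : IsCoupledPeriodicSolution (fun x => q₁ - a₁ * x - b₁ * x ^ 3)
      (fun x => q₂ - a₂ * x - b₂ * x ^ 3) k₁ k₂ T z₁ z₂ v₁ v₂)
    (hT : 0 < T) (hb₁ : 0 < b₁) (hb₂ : 0 ≤ b₂)
    (hnc : ∃ t ∈ Icc 0 T, z₁ t ≠ z₁ 0 ∨ z₂ t ≠ z₂ 0) : a₁ + a₂ < 0 := by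
  have hderiv (q a b x : ℝ) :
      HasDerivAt (fun x => q - a * x - b * x ^ 3) (-a - 3 * b * x ^ 2) x :=
    ((((hasDerivAt_id x).const_mul a).const_sub q).sub
      ((hasDerivAt_pow 3 x).const_mul b)).congr_deriv (by ring)
  have hc₁ : Continuous fun x => q₁ - a₁ * x - b₁ * x ^ 3 := by fun_prop
  have hc₂ : Continuous fun x => q₂ - a₂ * x - b₂ * x ^ 3 := by fun_prop
  have hz₁ := HasDerivAt.continuousOn h.hasDerivAt₁
  have hz₂ := HasDerivAt.continuousOn h.hasDerivAt₂
  have hv₁ := h.continuousOn_v₁ hc₁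
  have hv₂ := h.swap.continuousOn_v₁ hc₂
  have hdulac := h.integral_sq_v₂_mul_add_integral_sq_v₁_mul_eq_zero hT.le (hderiv q₁ a₁ b₁)
    (by fun_prop) (hderiv q₂ a₂ b₂) (by fun_prop)
  rw [integral_cubic_deriv_mul_sq a₁ b₁ hT.le hz₁ hv₁,
    integral_cubic_deriv_mul_sq a₂ b₂ hT.le hz₂ hv₂] at hdulac
  have hI₁ := h.integral_sq_v₁_pos hT hc₁ hc₂ hnc
  have hI₂ := h.integral_sq_v₂_pos hT hc₁ hc₂ hnc
  have hJ₁ : 0 ≤ ∫ t in 0..T, (z₁ t * v₁ t) ^ 2 := integral_nonneg hT.le fun t _ => sq_nonneg _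
  have hJ₂ : 0 ≤ ∫ t in 0..T, (z₂ t * v₂ t) ^ 2 := integral_nonneg hT.le fun t _ => sq_nonneg _
  by_contra! ha
  have hJ₁0 : ∫ t in 0..T, (z₁ t * v₁ t) ^ 2 = 0 := by
    nlinarith [mul_nonneg (mul_nonneg ha hI₁.le) hI₂.le, mul_nonneg (mul_nonneg hb₂ hI₁.le) hJ₂,
      mul_pos hb₁ hI₂]
  exact h.not_constant₁ hT hc₁ hc₂ hnc <| constant_of_hasDerivAt_of_mul_eq_zero h.hasDerivAt₁ <|
    eqOn_zero_of_integral_sq_eq_zero hT (hz₁.mul hv₁) hJ₁0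

end IsCoupledPeriodicSolution

theorem two_agent_periodic_necessary_conditions_general
    (w₁ w₂ r₁ r₂ : ℝ) (hr₁ : 0 < r₁) (hr₂ : 0 < r₂)
    (c₁ c₂ p₁ p₂ : ℝ) (B : ℝ) (hB : B = r₁ + r₂)
    (z₁ z₂ : ℝ → ℝ)
    (hsol₁ : ∀ t : ℝ, 0 ≤ t → HasDerivAt z₁
      ((-(w₁ * r₁ / B) * (z₁ t - p₁) - (z₁ t) ^ 3 / r₁)
        + (c₁ * r₂ / B) * (z₂ t - z₁ t)) t)
    (hsol₂ : ∀ t : ℝ, 0 ≤ t → HasDerivAt z₂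
      ((-(w₂ * r₂ / B) * (z₂ t - p₂) - (z₂ t) ^ 3 / r₂)
        - (c₂ * r₁ / B) * (z₂ t - z₁ t)) t)
    (T : ℝ) (hT : 0 < T)
    (hper : ∀ t : ℝ, 0 ≤ t → z₁ (t + T) = z₁ t ∧ z₂ (t + T) = z₂ t)
    (hnonconst : ∃ t₁ t₂ : ℝ, 0 ≤ t₁ ∧ 0 ≤ t₂ ∧ (z₁ t₁, z₂ t₁) ≠ (z₁ t₂, z₂ t₂)) :
    (c₁ < 0 ∨ c₂ < 0) ∧ c₁ * c₂ ≠ 0 ∧ c₂ * r₁ + w₁ * r₁ + w₂ * r₂ + c₁ * r₂ < 0 := by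
  have hB₀ : 0 < B := hB ▸ add_pos hr₁ hr₂
  have h : IsCoupledPeriodicSolution
      (fun x => w₁ * r₁ / B * p₁ - (w₁ * r₁ / B + c₁ * r₂ / B) * x - r₁⁻¹ * x ^ 3)
      (fun x => w₂ * r₂ / B * p₂ - (w₂ * r₂ / B + c₂ * r₁ / B) * x - r₂⁻¹ * x ^ 3)
      (c₁ * r₂ / B) (c₂ * r₁ / B) T z₁ z₂ _ _ :=
    { hasDerivAt₁ := fun t ht => hsol₁ t ht.1
      hasDerivAt₂ := fun t ht => hsol₂ t ht.1
      eqOn₁ := fun t _ => by ring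
      eqOn₂ := fun t _ => by ring
      periodic₁ := by simpa using (hper 0 le_rfl).1
      periodic₂ := by simpa using (hper 0 le_rfl).2 }
  obtain ⟨t, ht, hne⟩ := exists_mem_Icc_ne_of_add_eq (u := fun t => (z₁ t, z₂ t)) hT
    (fun t ht => Prod.ext (hper t ht).1 (hper t ht).2) hnonconst
  have hnc : ∃ t ∈ Icc 0 T, z₁ t ≠ z₁ 0 ∨ z₂ t ≠ z₂ 0 :=
    ⟨t, ht, not_and_or.1 fun h => hne (Prod.ext h.1 h.2)⟩
  have hk := h.coupling_mul_neg hT (by fun_prop) (by fun_prop) hnc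
  have ha := h.linear_coeff_add_neg hT (inv_pos.2 hr₁) (inv_pos.2 hr₂).le hnc
  have hc : c₁ * c₂ < 0 := by
    have hk' : c₁ * c₂ * (r₁ * r₂ / B ^ 2) < 0 := by linear_combination hk
    exact neg_of_mul_neg_left hk' (by positivity)
  refine ⟨(mul_neg_iff.1 hc).elim (fun h => Or.inr h.2) (fun h => Or.inl h.1), hc.ne, ?_⟩
  have ha' : (c₂ * r₁ + w₁ * r₁ + w₂ * r₂ + c₁ * r₂) / B < 0 := by linear_combination ha
  exact neg_of_div_neg_left ha' hB₀.le

/-- Necessary conditions for the existence of non-constant periodic solutions of the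
two-agent opinion dynamics: (i) `c₁ < 0` or `c₂ < 0`; (ii) `c₁ c₂ ≠ 0`;
(iii) `c₂r₁ + w₁r₁ + w₂r₂ + c₁r₂ < 0`. -/
theorem two_agent_periodic_necessary_conditions
    (w₁ w₂ r₁ r₂ : ℝ) (hw₁ : 0 < w₁) (hw₂ : 0 < w₂) (hr₁ : 0 < r₁) (hr₂ : 0 < r₂)
    (c₁ c₂ p₁ p₂ : ℝ) (B : ℝ) (hB : B = r₁ + r₂)
    (z₁ z₂ : ℝ → ℝ)
    (hd₁ : Differentiable ℝ z₁) (hd₂ : Differentiable ℝ z₂)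
    (hsol₁ : ∀ t : ℝ, 0 ≤ t → HasDerivAt z₁
      ((-(w₁ * r₁ / B) * (z₁ t - p₁) - (z₁ t) ^ 3 / r₁)
        + (c₁ * r₂ / B) * (z₂ t - z₁ t)) t)
    (hsol₂ : ∀ t : ℝ, 0 ≤ t → HasDerivAt z₂
      ((-(w₂ * r₂ / B) * (z₂ t - p₂) - (z₂ t) ^ 3 / r₂)
        - (c₂ * r₁ / B) * (z₂ t - z₁ t)) t)
    (T : ℝ) (hT : 0 < T)
    (hper : ∀ t : ℝ, 0 ≤ t → z₁ (t + T) = z₁ t ∧ z₂ (t + T) = z₂ t)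
    (hnonconst : ∃ t₁ t₂ : ℝ, 0 ≤ t₁ ∧ 0 ≤ t₂ ∧ (z₁ t₁, z₂ t₁) ≠ (z₁ t₂, z₂ t₂)) :
    (c₁ < 0 ∨ c₂ < 0) ∧ c₁ * c₂ ≠ 0 ∧ c₂ * r₁ + w₁ * r₁ + w₂ * r₂ + c₁ * r₂ < 0 :=
  two_agent_periodic_necessary_conditions_general w₁ w₂ r₁ r₂ hr₁ hr₂ c₁ c₂ p₁ p₂ B hB z₁ z₂ hsol₁
    hsol₂ T hT hper hnonconst
end

section
/- (Purely imaginary eigenvalues of the Jacobian at the Hopf bifurcation point) Consider the two-agent opinion dynamics and suppose the self functions' unique roots coincide: m_1 = m_2 = m. Define g := r_1/B > 0, d := c_1 r_2/B, κ_i := w_i r_i/B + 3m²/r_i > 0 for i ∈ {1,2}, and c_2* := −(κ_1 + κ_2 + d)/g. Assume d·(κ_2 − κ_1) − κ_1² > 0. Then the Jacobian matrix of the two-agent vector field evaluated at the consensus equilibrium (m, m) with c_2 = c_2*, namely J = [[−κ_1 − d, d], [g c_2*, −κ_2 − g c_2*]], has trace zero and determinant d·(κ_2 − κ_1) − κ_1²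 > 0; consequently its eigenvalues form a nonzero purely imaginary conjugate pair. -/
/-!
With `g c₂* = -(κ₁ + κ₂ + d)` the lower-right entry of `J` becomes `κ₁ + d`, so `J` is traceless
with determinant `d (κ₂ - κ₁) - κ₁²`. The characteristic polynomial of a traceless `2 × 2` matrix
is `X² + det`, whose roots are `± i √det` when `det > 0`.
-/

open Complex Polynomial

theorem Complex.sq_add_ofReal_sq_eq_zero_iff (μ : ℂ) (ω : ℝ) :
    μ ^ 2 + (ω : ℂ) ^ 2 = 0 ↔ μ = ω * I ∨ μ = -(ω * I) := by
  have hωI : ((ω : ℂ) * I) ^ 2 = -(ω : ℂ) ^ 2 := by rw [mul_pow, I_sq, mul_neg_one]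
  rw [add_eq_zero_iff_eq_neg, ← hωI, sq_eq_sq_iff_eq_or_eq_neg]

theorem Matrix.isRoot_charpoly_map_complex_iff_of_trace_eq_zero
    (M : Matrix (Fin 2) (Fin 2) ℝ) (htr : M.trace = 0) (hdet : 0 ≤ M.det) (μ : ℂ) :
    (M.map (algebraMap ℝ ℂ)).charpoly.IsRoot μ ↔
      μ = (√M.det : ℂ) * I ∨ μ = -((√M.det : ℂ) * I) := by
  have hcharpoly : M.charpoly = X ^ 2 + C (√M.det ^ 2) := by
    rw [M.charpoly_fin_two, htr, Real.sq_sqrt hdet, C_0, zero_mul, sub_zero]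
  rw [Matrix.charpoly_map, hcharpoly, ← Complex.sq_add_ofReal_sq_eq_zero_iff]
  simp

theorem hopf_jacobian_purely_imaginary_eigenvalues_general
    (r₁ r₂ : ℝ) (hr₁ : 0 < r₁) (hr₂ : 0 < r₂)
    (B : ℝ) (hB : B = r₁ + r₂)
    (g d κ₁ κ₂ c₂star : ℝ)
    (hg : g = r₁ / B)
    (hc₂star : c₂star = -(κ₁ + κ₂ + d) / g)
    (hpos : 0 < d * (κ₂ - κ₁) - κ₁ ^ 2)
    (J : Matrix (Fin 2) (Fin 2) ℝ)
    (hJ : J = !![-κ₁ - d, d; g * c₂star, -κ₂ - g * c₂star]) :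
    Matrix.trace J = 0 ∧
    J.det = d * (κ₂ - κ₁) - κ₁ ^ 2 ∧ 0 < J.det ∧
    ∃ ω : ℝ, ω ≠ 0 ∧ ∀ μ : ℂ,
      (J.map (algebraMap ℝ ℂ)).charpoly.IsRoot μ ↔
        (μ = (ω : ℂ) * Complex.I ∨ μ = -((ω : ℂ) * Complex.I)) := by
  have hg_ne : g ≠ 0 := by rw [hg, hB]; positivity
  have hgc : g * c₂star = -(κ₁ + κ₂ + d) := by rw [hc₂star]; field_simp
  have htr : J.trace = 0 := by rw [hJ, Matrix.trace_fin_two_of, hgc]; ring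
  have hdet : J.det = d * (κ₂ - κ₁) - κ₁ ^ 2 := by rw [hJ, Matrix.det_fin_two_of, hgc]; ring
  have hdet_pos : 0 < J.det := hdet ▸ hpos
  exact ⟨htr, hdet, hdet_pos, √J.det, (Real.sqrt_pos.2 hdet_pos).ne',
    J.isRoot_charpoly_map_complex_iff_of_trace_eq_zero htr hdet_pos.le⟩

/-- Purely imaginary eigenvalues of the Jacobian of the two-agent opinion dynamics at
the consensus equilibrium `(m, m)` for the Hopf bifurcation value `c₂ = c₂*`: the
Jacobian has trace zero and determinant `d(κ₂ − κ₁) − κ₁² > 0`, so its eigenvalues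
form a nonzero purely imaginary conjugate pair `±iω`. -/
theorem hopf_jacobian_purely_imaginary_eigenvalues
    (w₁ w₂ r₁ r₂ : ℝ) (hw₁ : 0 < w₁) (hw₂ : 0 < w₂) (hr₁ : 0 < r₁) (hr₂ : 0 < r₂)
    (c₁ p₁ p₂ : ℝ) (B : ℝ) (hB : B = r₁ + r₂)
    (m : ℝ)
    (hm₁ : -(w₁ * r₁ / B) * (m - p₁) - m ^ 3 / r₁ = 0)
    (hm₂ : -(w₂ * r₂ / B) * (m - p₂) - m ^ 3 / r₂ = 0)
    (g d κ₁ κ₂ c₂star : ℝ)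
    (hg : g = r₁ / B) (hd : d = c₁ * r₂ / B)
    (hκ₁ : κ₁ = w₁ * r₁ / B + 3 * m ^ 2 / r₁)
    (hκ₂ : κ₂ = w₂ * r₂ / B + 3 * m ^ 2 / r₂)
    (hc₂star : c₂star = -(κ₁ + κ₂ + d) / g)
    (hpos : 0 < d * (κ₂ - κ₁) - κ₁ ^ 2)
    (J : Matrix (Fin 2) (Fin 2) ℝ)
    (hJ : J = !![-κ₁ - d, d; g * c₂star, -κ₂ - g * c₂star]) :
    Matrix.trace J = 0 ∧
    J.det = d * (κ₂ - κ₁) - κ₁ ^ 2 ∧ 0 < J.det ∧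
    ∃ ω : ℝ, ω ≠ 0 ∧ ∀ μ : ℂ,
      (J.map (algebraMap ℝ ℂ)).charpoly.IsRoot μ ↔
        (μ = (ω : ℂ) * Complex.I ∨ μ = -((ω : ℂ) * Complex.I)) :=
  hopf_jacobian_purely_imaginary_eigenvalues_general r₁ r₂ hr₁ hr₂ B hB g d κ₁ κ₂ c₂star hg hc₂star
    hpos J hJ
end
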